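/- arXiv:1404.3768 — 7 statements merged into one kernel-verified Lean document; each statement's English description precedes it below -/
import Mathlib

section
/- Let M be a matroid on finite ground set E with rank function r, let x : E → [0,1], and define x̃(e) = min(2·x(e), 1). Suppose for some S ⊆ E the constraint ∑_{e∈S} x̃(e) ≥ r(E) - r(E\S) is violated (i.e., ∑_{e∈S} x̃(e) < r(E) - r(E\S)). Then ∑_{e∈S} x(e) ≤ r(E) - r(E\S) - 1/2. -/
/-- The rank of a set `S` in a matroid `M`: the largest size of an independent subset of `S`. -/
noncomputable def mrank {α : Type*} (M : Matroid α) (S : Set α) : ℕ :=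
  sSup {n : ℕ | ∃ I : Set α, M.Indep I ∧ I ⊆ S ∧ I.ncard = n}

/-!
Let `T ⊆ S` be the elements with `x e ≥ 1/2`, so `x̃ = 1` on `T` and `x̃ = 2x` off `T`.
Then `|T| ≤ ∑_S x̃` and `2 ∑_S x ≤ ∑_S x̃ + |T|`. If `∑_S x̃ < k` for an integer
`k = r(E) - r(E \ S)`, integrality forces `|T| ≤ k - 1`, hence `2 ∑_S x < 2k - 1`.
-/

open Finset

section Truncation

variable {ι : Type*} (S : Finset ι) (x : ι → ℝ)

lemma card_filter_half_le_sum_min (h0 : ∀ e ∈ S, 0 ≤ x e) :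
    (#{e ∈ S | 1 / 2 ≤ x e} : ℝ) ≤ ∑ e ∈ S, min (2 * x e) 1 := by
  rw [← sum_boole]
  refine sum_le_sum fun e he => ?_
  split_ifs with h
  · exact le_min (by linarith) le_rfl
  · exact le_min (by linarith [h0 e he]) zero_le_one

lemma two_mul_sum_le_sum_min_add_card (h1 : ∀ e ∈ S, x e ≤ 1) :
    2 * ∑ e ∈ S, x e ≤ ∑ e ∈ S, min (2 * x e) 1 + #{e ∈ S | 1 / 2 ≤ x e} := by
  rw [← sum_boole, mul_sum, ← sum_add_distrib]
  refine sum_le_sum fun e he => ?_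
  split_ifs with h
  · linarith [min_eq_right (by linarith : (1 : ℝ) ≤ 2 * x e), h1 e he]
  · linarith [min_eq_left (by linarith : 2 * x e ≤ 1)]

lemma sum_le_sub_half_of_sum_min_lt (h0 : ∀ e ∈ S, 0 ≤ x e) (h1 : ∀ e ∈ S, x e ≤ 1)
    {k : ℤ} (hk : ∑ e ∈ S, min (2 * x e) 1 < k) :
    ∑ e ∈ S, x e ≤ k - 1 / 2 := by
  have hcard := card_filter_half_le_sum_min S x h0
  have hcard_lt : (#{e ∈ S | 1 / 2 ≤ x e} : ℤ) < k := by exact_mod_cast hcard.trans_lt hk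
  have hcard_le : (#{e ∈ S | 1 / 2 ≤ x e} : ℝ) ≤ k - 1 := by
    exact_mod_cast Int.le_sub_one_of_lt hcard_lt
  linarith [two_mul_sum_le_sum_min_add_card S x h1]

end Truncation

theorem stmt_5_general {α : Type*} (M : Matroid α)
    (x : α → ℝ) (hx : ∀ e, 0 ≤ x e ∧ x e ≤ 1) (S : Finset α)
    (hviol : ∑ e ∈ S, min (2 * x e) 1 < (mrank M Set.univ : ℝ) - (mrank M (Set.univ \ ↑S) : ℝ)) :
    ∑ e ∈ S, x e ≤ (mrank M Set.univ : ℝ) - (mrank M (Set.univ \ ↑S) : ℝ) - 1 / 2 := by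
  exact_mod_cast sum_le_sub_half_of_sum_min_lt S x (fun e _ => (hx e).1) (fun e _ => (hx e).2)
    (k := (mrank M Set.univ : ℤ) - mrank M (Set.univ \ ↑S)) (by exact_mod_cast hviol)

theorem stmt_5 {α : Type*} [Fintype α] (M : Matroid α) (hE : M.E = Set.univ)
    (x : α → ℝ) (hx : ∀ e, 0 ≤ x e ∧ x e ≤ 1) (S : Finset α)
    (hviol : ∑ e ∈ S, min (2 * x e) 1 < (mrank M Set.univ : ℝ) - (mrank M (Set.univ \ ↑S) : ℝ)) :
    ∑ e ∈ S, x e ≤ (mrank M Set.univ : ℝ) - (mrank M (Set.univ \ ↑S) : ℝ) - 1 / 2 :=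
  stmt_5_general M x hx S hviol
end

section
/- In a graph consisting of two disjoint odd cycles C¹ and C² each of length 3ℓ (ℓ odd), together with three 'interface' vertices u_R, u_G, u_B where u_i is adjacent to one distinguished vertex on each of C¹ and C², and a 'switch' vertex s adjacent to all three interface vertices, every perfect matching matches exactly one interface vertex to s, one interface vertex to a vertex of C¹, and one interface vertex to a vertex of C². -/
/-!
A perfect matching cannot pair up the vertices of an odd set among themselves, so each cycle,
having odd length `3ℓ`, has a vertex matched outside it, and the only such neighbours are
interface vertices. The switch is matched to an interface vertex as well. These three interface
vertices are distinct because each is matched to only one vertex.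
-/

/-- Vertices of the gadget: two cycles of length `3l`, three interface vertices, one switch. -/
abbrev GadgetV (l : ℕ) := (Fin (3 * l) ⊕ Fin (3 * l)) ⊕ (Fin 3 ⊕ Unit)

/-- Adjacency along a cycle on `Fin n`. -/
def cycAdj (n : ℕ) (i j : Fin n) : Prop :=
  ((j : ℕ) = (i : ℕ) + 1) ∨ ((i : ℕ) = n - 1 ∧ (j : ℕ) = 0)

/-- The edges of the gadget: the two cycles, interface vertex `i` joined to the
distinguished vertices at position `i·l` on each cycle, and the switch joined to
all three interface vertices. -/
def gadgetRel (l : ℕ) : GadgetV l → GadgetV l → Prop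
  | .inl (.inl i), .inl (.inl j) => cycAdj (3 * l) i j
  | .inl (.inr i), .inl (.inr j) => cycAdj (3 * l) i j
  | .inr (.inl i), .inl (.inl j) => (j : ℕ) = (i : ℕ) * l
  | .inr (.inl i), .inl (.inr j) => (j : ℕ) = (i : ℕ) * l
  | .inr (.inr _), .inr (.inl _) => True
  | _, _ => False

def gadget (l : ℕ) : SimpleGraph (GadgetV l) := SimpleGraph.fromRel (gadgetRel l)

namespace SimpleGraph.Subgraph

variable {V : Type*} {G : SimpleGraph V} {M : G.Subgraph}

theorem IsPerfectMatching.exists_adj_notMem_of_odd_ncard [Finite V] (hM : M.IsPerfectMatching)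
    {s : Set V} (hs : Odd s.ncard) : ∃ v ∈ s, ∃ w ∉ s, M.Adj v w := by
  by_contra! hclosed
  have hmatch : (M.induce s).IsMatching := by
    intro v hv
    obtain ⟨w, hvw, huniq⟩ := hM.1 (hM.2 v)
    exact ⟨w, ⟨hv, of_not_not fun hw ↦ hclosed v hv w hw hvw, hvw⟩,
      fun w' h ↦ huniq w' h.2.2⟩
  have := Fintype.ofFinite s
  refine Nat.not_even_iff_odd.2 hs ?_
  rw [Set.ncard_eq_toFinset_card']
  exact @IsMatching.even_card _ _ _ (‹Fintype s›) hmatch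

end SimpleGraph.Subgraph

lemma Fin.exists_perm_three (a b c : Fin 3) (hab : a ≠ b) (hac : a ≠ c) (hbc : b ≠ c) :
    ∃ σ : Equiv.Perm (Fin 3), σ 0 = a ∧ σ 1 = b ∧ σ 2 = c := by
  revert a b c
  decide

section Gadget

variable {l : ℕ}

lemma gadget_adj_switch {w : GadgetV l} (h : (gadget l).Adj (.inr (.inr ())) w) :
    ∃ i, w = .inr (.inl i) := by
  rcases w with (k | k) | (i | u)
  all_goals simp_all [gadget, gadgetRel]

lemma gadget_adj_cycle₁ {j : Fin (3 * l)} {w : GadgetV l} (h : (gadget l).Adj (.inl (.inl j)) w) :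
    w ∈ Set.range (fun j ↦ .inl (.inl j)) ∨ ∃ i, w = .inr (.inl i) := by
  rcases w with (k | k) | (i | u)
  all_goals simp_all [gadget, gadgetRel]

lemma gadget_adj_cycle₂ {j : Fin (3 * l)} {w : GadgetV l} (h : (gadget l).Adj (.inl (.inr j)) w) :
    w ∈ Set.range (fun j ↦ .inl (.inr j)) ∨ ∃ i, w = .inr (.inl i) := by
  rcases w with (k | k) | (i | u)
  all_goals simp_all [gadget, gadgetRel]

lemma exists_interface_adj_of_odd_cycle (hl : Odd l) {M : (gadget l).Subgraph}
    (hM : M.IsPerfectMatching) (c : Fin (3 * l) → GadgetV l) (hc : c.Injective)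
    (hnbr : ∀ j w, (gadget l).Adj (c j) w → w ∈ Set.range c ∨ ∃ i, w = .inr (.inl i)) :
    ∃ i j, M.Adj (.inr (.inl i)) (c j) := by
  have hodd : Odd (Set.range c).ncard := by
    rw [Set.ncard_range_of_injective hc, Nat.card_eq_fintype_card, Fintype.card_fin]
    exact (by decide : Odd 3).mul hl
  obtain ⟨_, ⟨j, rfl⟩, w, hw, hjw⟩ := hM.exists_adj_notMem_of_odd_ncard hodd
  obtain ⟨i, rfl⟩ := (hnbr j w (M.adj_sub hjw)).resolve_left hw
  exact ⟨i, j, hjw.symm⟩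

end Gadget

/-- Every perfect matching of the gadget matches exactly one interface vertex to the
switch, one interface vertex into the first cycle, and one into the second cycle. -/
theorem stmt_10 (l : ℕ) (hl : Odd l)
    (Mch : (gadget l).Subgraph) (hM : Mch.IsPerfectMatching) :
    ∃ σ : Equiv.Perm (Fin 3),
      Mch.Adj (.inr (.inl (σ 0))) (.inr (.inr ())) ∧
      (∃ v : Fin (3 * l), Mch.Adj (.inr (.inl (σ 1))) (.inl (.inl v))) ∧
      (∃ v : Fin (3 * l), Mch.Adj (.inr (.inl (σ 2))) (.inl (.inr v))) := by
  obtain ⟨w, hw⟩ := hM.1 (hM.2 (.inr (.inr ())))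
  obtain ⟨a, rfl⟩ := gadget_adj_switch (Mch.adj_sub hw.1)
  obtain ⟨b, j₁, hb⟩ := exists_interface_adj_of_odd_cycle hl hM _
    (Sum.inl_injective.comp Sum.inl_injective) fun _ _ ↦ gadget_adj_cycle₁
  obtain ⟨c, j₂, hc⟩ := exists_interface_adj_of_odd_cycle hl hM _
    (Sum.inl_injective.comp Sum.inr_injective) fun _ _ ↦ gadget_adj_cycle₂
  have hab : a ≠ b := by rintro rfl; simpa using hM.1.eq_of_adj_left hw.1.symm hb
  have hac : a ≠ c := by rintro rfl; simpa using hM.1.eq_of_adj_left hw.1.symm hc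
  have hbc : b ≠ c := by rintro rfl; simpa using hM.1.eq_of_adj_left hb hc
  obtain ⟨σ, rfl, rfl, rfl⟩ := Fin.exists_perm_three a b c hab hac hbc
  exact ⟨σ, hw.1.symm, ⟨j₁, hb⟩, ⟨j₂, hc⟩⟩
end

section
/- For a graph G of maximum degree d, the edge set of G can be partitioned into at most d+1 matchings. -/
set_option linter.unusedSectionVars false

namespace Vizing

variable {V : Type*} [Fintype V] [DecidableEq V] {G : SimpleGraph V} [DecidableRel G.Adj]
  {n : ℕ}

/-- A partial proper edge coloring of `G` with `n` colors. -/
structure VPC (G : SimpleGraph V) (n : ℕ) where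
  col : V → V → Option (Fin n)
  symm : ∀ u v, col u v = col v u
  adj : ∀ u v, col u v ≠ none → G.Adj u v
  proper : ∀ u v w (a : Fin n), col u v = some a → col u w = some a → v = w

/-- Color `a` is free (unused) at vertex `u`. -/
def VFree (C : VPC G n) (a : Fin n) (u : V) : Prop := ∀ v, C.col u v ≠ some a

lemma exists_free {d : ℕ} (C : VPC G (d+1)) (u : V) (hu : G.degree u ≤ d) :
    ∃ a, VFree C a u := by
  by_contra h
  push_neg at h
  simp only [VFree, not_forall, not_not] at h
  choose f hf using h
  have hinj : Function.Injective f := by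
    intro a a' he
    have h1 := hf a
    rw [he, hf a'] at h1
    exact (Option.some_injective _ h1.symm)
  have hsub : Finset.univ.image f ⊆ G.neighborFinset u := by
    intro v hv
    simp only [Finset.mem_image] at hv
    obtain ⟨a, -, rfl⟩ := hv
    rw [SimpleGraph.mem_neighborFinset]
    exact C.adj u (f a) (by rw [hf a]; simp)
  have := Finset.card_le_card hsub
  rw [Finset.card_image_of_injective _ hinj, Finset.card_univ, Fintype.card_fin] at this
  rw [SimpleGraph.card_neighborFinset_eq_degree] at this
  omega

/-- Assign a color to an uncolored edge whose endpoints both miss that color. -/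
lemma assign (C : VPC G n) (x y : V) (b : Fin n) (hxy : C.col x y = none)
    (hadj : G.Adj x y) (hbx : VFree C b x) (hby : VFree C b y) :
    ∃ C' : VPC G n, C'.col x y = some b ∧
      ∀ u v, s(u,v) ≠ s(x,y) → C'.col u v = C.col u v := by
  have hyx : y ≠ x := hadj.ne'
  refine ⟨⟨fun u v => if s(u,v) = s(x,y) then some b else C.col u v, ?_, ?_, ?_⟩, ?_, ?_⟩
  · intro u v
    have h : s(u,v) = s(v,u) := Sym2.eq_swap
    simp only [h, C.symm u v]
  · intro u v h
    by_cases hc : s(u,v) = s(x,y)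
    · rw [Sym2.eq_iff] at hc
      rcases hc with ⟨rfl, rfl⟩ | ⟨rfl, rfl⟩
      · exact hadj
      · exact hadj.symm
    · simp only [hc, if_false] at h
      exact C.adj u v h
  · intro u v w a' h1 h2
    by_cases hc1 : s(u,v) = s(x,y) <;> by_cases hc2 : s(u,w) = s(x,y) <;>
      simp only [hc1, hc2, if_true, if_false] at h1 h2
    · exact (Sym2.congr_right.mp (hc1.trans hc2.symm))
    · exfalso
      rw [Option.some_inj] at h1
      subst h1
      rw [Sym2.eq_iff] at hc1
      rcases hc1 with ⟨rfl, rfl⟩ | ⟨rfl, rfl⟩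
      · exact hbx w h2
      · exact hby w h2
    · exfalso
      rw [Option.some_inj] at h2
      subst h2
      rw [Sym2.eq_iff] at hc2
      rcases hc2 with ⟨rfl, rfl⟩ | ⟨rfl, rfl⟩
      · exact hbx v h1
      · exact hby v h1
    · exact C.proper u v w a' h1 h2
  · simp
  · intro u v h
    simp only [h, if_false]

/-- Move color `a` from edge `xz` to the uncolored edge `xy`, where `a` is free at `y`. -/
lemma move (C : VPC G n) (x y z : V) (a : Fin n) (hxy : C.col x y = none)
    (hadj : G.Adj x y) (hxz : C.col x z = some a) (hfree : VFree C a y) :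
    ∃ C' : VPC G n, C'.col x y = some a ∧ C'.col x z = none ∧
      ∀ u v, s(u,v) ≠ s(x,y) → s(u,v) ≠ s(x,z) → C'.col u v = C.col u v := by
  have hyx : y ≠ x := hadj.ne'
  have hzx : z ≠ x := (C.adj x z (by simp [hxz])).ne'
  have hzy : z ≠ y := by rintro rfl; rw [hxy] at hxz; exact absurd hxz (by simp)
  have hzy' : s(x,z) ≠ s(x,y) := fun h => hzy (Sym2.congr_right.mp h)
  refine ⟨⟨fun u v => if s(u,v) = s(x,y) then some a else
      if s(u,v) = s(x,z) then none else C.col u v, ?_, ?_, ?_⟩, ?_, ?_, ?_⟩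
  · intro u v
    have h : s(u,v) = s(v,u) := Sym2.eq_swap
    simp only [h, C.symm u v]
  · intro u v h
    by_cases hc : s(u,v) = s(x,y)
    · rw [Sym2.eq_iff] at hc
      rcases hc with ⟨rfl, rfl⟩ | ⟨rfl, rfl⟩
      · exact hadj
      · exact hadj.symm
    · by_cases hc2 : s(u,v) = s(x,z)
      · rw [Sym2.eq_iff] at hc2
        have hadj2 : G.Adj x z := C.adj x z (by simp [hxz])
        rcases hc2 with ⟨rfl, rfl⟩ | ⟨rfl, rfl⟩
        · exact hadj2
        · exact hadj2.symm
      · simp only [hc, hc2, if_false] at h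
        exact C.adj u v h
  · intro u v w a' h1 h2
    by_cases hc1 : s(u,v) = s(x,y) <;> by_cases hc2 : s(u,w) = s(x,y) <;>
    by_cases hc1' : s(u,v) = s(x,z) <;> by_cases hc2' : s(u,w) = s(x,z) <;>
      simp only [hc1, hc2, hc1', hc2', hzy', if_true, if_false, reduceCtorEq] at h1 h2
    all_goals try exact absurd (hc1'.symm.trans hc1) hzy'
    all_goals try exact absurd (hc2'.symm.trans hc2) hzy'
    all_goals try exact Sym2.congr_right.mp (hc1.trans hc2.symm)
    all_goals try {
      exfalso
      obtain rfl : a = a' := Option.some_inj.mp h1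
      rw [Sym2.eq_iff] at hc1
      rcases hc1 with ⟨rfl, rfl⟩ | ⟨rfl, rfl⟩
      · exact hc2' (by rw [C.proper _ w z a h2 hxz])
      · exact hfree w h2 }
    all_goals try {
      exfalso
      obtain rfl : a = a' := Option.some_inj.mp h2
      rw [Sym2.eq_iff] at hc2
      rcases hc2 with ⟨rfl, rfl⟩ | ⟨rfl, rfl⟩
      · exact hc1' (by rw [C.proper _ v z a h1 hxz])
      · exact hfree v h1 }
    all_goals exact C.proper u v w a' h1 h2
  · simp
  · simp [hzy']
  · intro u v h h'
    simp only [h, h', if_false]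


open SimpleGraph Walk in
/-- The subgraph of edges colored `a` or `b`. -/
def abGraph (C : VPC G n) (a b : Fin n) : SimpleGraph V where
  Adj u v := C.col u v = some a ∨ C.col u v = some b
  symm := ⟨by intro u v h; rwa [C.symm v u]⟩
  loopless := ⟨by
    intro u h
    exact G.loopless.irrefl u (C.adj u u (by rcases h with h | h <;> simp [h]))⟩

instance (C : VPC G n) (a b : Fin n) : DecidableRel (abGraph C a b).Adj := fun u v =>
  inferInstanceAs (Decidable (_ ∨ _))

lemma abGraph_adj (C : VPC G n) (a b : Fin n) {u v : V} :
    (abGraph C a b).Adj u v ↔ (C.col u v = some a ∨ C.col u v = some b) := Iff.rfl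

/-- Kempe chain flip: swap colors `a`,`b` on the connected component of `z` in the
`a`/`b`-subgraph. -/
lemma flip (C : VPC G n) (a b : Fin n) (z : V) :
    ∃ C' : VPC G n,
      (∀ u v, ¬ (abGraph C a b).Reachable z u → C'.col u v = C.col u v) ∧
      (∀ u v, (abGraph C a b).Reachable z u →
        C'.col u v = (C.col u v).map (Equiv.swap a b)) := by
  classical
  set H := abGraph C a b with hH
  have hmap : ∀ u v, ¬(C.col u v = some a ∨ C.col u v = some b) →
      (C.col u v).map (Equiv.swap a b) = C.col u v := by
    intro u v h
    push_neg at h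
    cases hc : C.col u v with
    | none => rfl
    | some c =>
      simp only [Option.map_some, Option.some_inj]
      refine Equiv.swap_apply_of_ne_of_ne ?_ ?_
      · rintro rfl; exact h.1 hc
      · rintro rfl; exact h.2 hc
  set col' : V → V → Option (Fin n) := fun u v =>
    if H.Reachable z u ∧ (C.col u v = some a ∨ C.col u v = some b)
    then (C.col u v).map (Equiv.swap a b) else C.col u v with hcol'
  have hchar1 : ∀ u v, ¬ H.Reachable z u → col' u v = C.col u v := by
    intro u v h
    simp only [hcol']
    exact if_neg (fun hc => h hc.1)
  have hchar2 : ∀ u v, H.Reachable z u → col' u v = (C.col u v).map (Equiv.swap a b) := by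
    intro u v h
    simp only [hcol']
    by_cases hab : C.col u v = some a ∨ C.col u v = some b
    · rw [if_pos ⟨h, hab⟩]
    · rw [if_neg (fun hc => hab hc.2), hmap u v hab]
  have hsymm : ∀ u v, col' u v = col' v u := by
    intro u v
    by_cases hr : H.Reachable z u <;> by_cases hr' : H.Reachable z v
    · rw [hchar2 u v hr, hchar2 v u hr', C.symm]
    · have hab : ¬(C.col u v = some a ∨ C.col u v = some b) := by
        intro h
        exact hr' (hr.trans (SimpleGraph.Adj.reachable (show H.Adj u v from h)))
      rw [hchar2 u v hr, hchar1 v u hr', hmap u v hab, C.symm]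
    · have hab : ¬(C.col v u = some a ∨ C.col v u = some b) := by
        intro h
        exact hr (hr'.trans (SimpleGraph.Adj.reachable (show H.Adj v u from h)))
      rw [hchar1 u v hr, hchar2 v u hr', hmap v u hab, C.symm]
    · rw [hchar1 u v hr, hchar1 v u hr', C.symm]
  have hadj : ∀ u v, col' u v ≠ none → G.Adj u v := by
    intro u v h
    by_cases hr : H.Reachable z u
    · rw [hchar2 u v hr] at h
      exact C.adj u v (fun hc => h (by rw [hc]; rfl))
    · rw [hchar1 u v hr] at h
      exact C.adj u v h
  have hproper : ∀ u v w (c : Fin n), col' u v = some c → col' u w = some c → v = w := by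
    intro u v w c h1 h2
    by_cases hr : H.Reachable z u
    · rw [hchar2 u v hr] at h1
      rw [hchar2 u w hr] at h2
      obtain ⟨c1, hc1, hc1'⟩ := Option.map_eq_some_iff.mp h1
      obtain ⟨c2, hc2, hc2'⟩ := Option.map_eq_some_iff.mp h2
      have : c1 = c2 := (Equiv.swap a b).injective (hc1'.trans hc2'.symm)
      exact C.proper u v w c1 hc1 (this ▸ hc2)
    · rw [hchar1 u v hr] at h1
      rw [hchar1 u w hr] at h2
      exact C.proper u v w c h1 h2
  exact ⟨⟨col', hsymm, hadj, hproper⟩, hchar1, hchar2⟩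

lemma card_col_eq_le_one (C : VPC G n) (w : V) (c : Fin n) :
    (Finset.univ.filter (fun v => C.col w v = some c)).card ≤ 1 :=
  Finset.card_le_one.mpr (fun v hv v' hv' => by
    simp only [Finset.mem_filter] at hv hv'
    exact C.proper w v v' c hv.2 hv'.2)

lemma ab_deg_le_two (C : VPC G n) (a b : Fin n) (w : V) :
    (abGraph C a b).degree w ≤ 2 := by
  rw [← SimpleGraph.card_neighborFinset_eq_degree]
  have hsub : (abGraph C a b).neighborFinset w ⊆
      (Finset.univ.filter (fun v => C.col w v = some a)) ∪
      (Finset.univ.filter (fun v => C.col w v = some b)) := by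
    intro v hv
    rw [SimpleGraph.mem_neighborFinset] at hv
    rcases hv with h | h
    · exact Finset.mem_union_left _ (Finset.mem_filter.mpr ⟨Finset.mem_univ _, h⟩)
    · exact Finset.mem_union_right _ (Finset.mem_filter.mpr ⟨Finset.mem_univ _, h⟩)
  calc ((abGraph C a b).neighborFinset w).card ≤ _ := Finset.card_le_card hsub
    _ ≤ _ + _ := Finset.card_union_le _ _
    _ ≤ 2 := by
        have := card_col_eq_le_one C w a
        have := card_col_eq_le_one C w b
        omega

lemma ab_deg_le_one_left (C : VPC G n) (a b : Fin n) (w : V) (hf : VFree C a w) :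
    (abGraph C a b).degree w ≤ 1 := by
  rw [← SimpleGraph.card_neighborFinset_eq_degree]
  have hsub : (abGraph C a b).neighborFinset w ⊆
      (Finset.univ.filter (fun v => C.col w v = some b)) := by
    intro v hv
    rw [SimpleGraph.mem_neighborFinset] at hv
    rcases hv with h | h
    · exact absurd h (hf v)
    · exact Finset.mem_filter.mpr ⟨Finset.mem_univ _, h⟩
  exact le_trans (Finset.card_le_card hsub) (card_col_eq_le_one C w b)

lemma ab_deg_le_one_right (C : VPC G n) (a b : Fin n) (w : V) (hf : VFree C b w) :
    (abGraph C a b).degree w ≤ 1 := by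
  rw [← SimpleGraph.card_neighborFinset_eq_degree]
  have hsub : (abGraph C a b).neighborFinset w ⊆
      (Finset.univ.filter (fun v => C.col w v = some a)) := by
    intro v hv
    rw [SimpleGraph.mem_neighborFinset] at hv
    rcases hv with h | h
    · exact Finset.mem_filter.mpr ⟨Finset.mem_univ _, h⟩
    · exact absurd h (hf v)
  exact le_trans (Finset.card_le_card hsub) (card_col_eq_le_one C w a)


open SimpleGraph Walk

lemma two_ne (H : SimpleGraph V) [DecidableRel H.Adj] {v u w w' : V}
    (h2 : H.degree v ≤ 2) (hu : H.Adj v u) (hw : H.Adj v w) (hw' : H.Adj v w')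
    (h1 : u ≠ w) (h1' : u ≠ w') : w = w' := by
  by_contra hne
  have hsub : ({u, w, w'} : Finset V) ⊆ H.neighborFinset v := by
    intro t ht
    simp only [Finset.mem_insert, Finset.mem_singleton] at ht
    rw [SimpleGraph.mem_neighborFinset]
    rcases ht with rfl | rfl | rfl <;> assumption
  have hcard : ({u, w, w'} : Finset V).card = 3 := by
    rw [Finset.card_insert_of_notMem (by simp [h1, h1']),
      Finset.card_insert_of_notMem (by simp [hne]), Finset.card_singleton]
  have := Finset.card_le_card hsub
  rw [hcard, SimpleGraph.card_neighborFinset_eq_degree] at this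
  omega

lemma one_ne (H : SimpleGraph V) [DecidableRel H.Adj] {v w w' : V}
    (h1 : H.degree v ≤ 1) (hw : H.Adj v w) (hw' : H.Adj v w') : w = w' := by
  by_contra hne
  have hsub : ({w, w'} : Finset V) ⊆ H.neighborFinset v := by
    intro t ht
    simp only [Finset.mem_insert, Finset.mem_singleton] at ht
    rw [SimpleGraph.mem_neighborFinset]
    rcases ht with rfl | rfl <;> assumption
  have := Finset.card_le_card hsub
  rw [Finset.card_pair hne, SimpleGraph.card_neighborFinset_eq_degree] at this
  omega

lemma force_aux (H : SimpleGraph V) [DecidableRel H.Adj] (h2 : ∀ w, H.degree w ≤ 2)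
    {v q : V} (P : H.Walk v q) :
    ∀ {r u : V} (Q : H.Walk v r) (huv : H.Adj u v),
      (Walk.cons huv P).IsPath → (Walk.cons huv Q).IsPath →
      P.length ≤ Q.length → P.support.IsPrefix Q.support := by
  induction P with
  | nil =>
    intro r u Q huv hP hQ hlen
    rw [Walk.support_nil]
    exact ⟨Q.support.tail, (Q.support_eq_cons).symm⟩
  | @cons v w q hvw P' ih =>
    intro r u Q huv hP hQ hlen
    cases Q with
    | nil => simp at hlen
    | @cons _ w' _ hvw' Q' =>
      have huw : u ≠ w := by
        rintro rfl
        exact ((Walk.cons_isPath_iff _ _).mp hP).2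
          (by rw [Walk.support_cons]; exact List.mem_cons_of_mem _ P'.start_mem_support)
      have huw' : u ≠ w' := by
        rintro rfl
        exact ((Walk.cons_isPath_iff _ _).mp hQ).2
          (by rw [Walk.support_cons]; exact List.mem_cons_of_mem _ Q'.start_mem_support)
      obtain rfl : w = w' := two_ne H (h2 v) huv.symm hvw hvw' huw huw'
      have hpre := ih Q' hvw ((Walk.cons_isPath_iff _ _).mp hP).1
        ((Walk.cons_isPath_iff _ _).mp hQ).1 (by simpa using hlen)
      obtain ⟨t, ht⟩ := hpre
      exact ⟨t, by rw [Walk.support_cons, Walk.support_cons, ← ht, List.cons_append]⟩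

lemma force (H : SimpleGraph V) [DecidableRel H.Adj] (h2 : ∀ w, H.degree w ≤ 2)
    {p q r : V} (hp : H.degree p ≤ 1) (P : H.Walk p q) (Q : H.Walk p r)
    (hP : P.IsPath) (hQ : Q.IsPath) (hlen : P.length ≤ Q.length) :
    P.support.IsPrefix Q.support := by
  cases P with
  | nil =>
    rw [Walk.support_nil]
    exact ⟨Q.support.tail, (Q.support_eq_cons).symm⟩
  | @cons _ w _ hpw P' =>
    cases Q with
    | nil => simp at hlen
    | @cons _ w' _ hpw' Q' =>
      obtain rfl : w = w' := one_ne H hp hpw hpw'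
      have hpre := force_aux H h2 P' Q' hpw hP hQ (by simpa using hlen)
      obtain ⟨t, ht⟩ := hpre
      exact ⟨t, by rw [Walk.support_cons, Walk.support_cons, ← ht, List.cons_append]⟩

lemma second_vertex (H : SimpleGraph V) {u v : V} (W : H.Walk u v) (hne : u ≠ v) :
    ∃ w, H.Adj u w ∧ w ∈ W.support.tail := by
  cases W with
  | nil => exact absurd rfl hne
  | @cons _ w _ h W' =>
    exact ⟨w, h, by rw [Walk.support_cons]; exact W'.start_mem_support⟩

lemma interior (H : SimpleGraph V) [DecidableRel H.Adj] {p r w : V} (Q : H.Walk p r)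
    (hQ : Q.IsPath) (hw : w ∈ Q.support) (hwp : w ≠ p) (hwr : w ≠ r) :
    2 ≤ H.degree w := by
  obtain ⟨u₂, hu₂adj, hu₂⟩ := second_vertex H (Q.dropUntil w hw) hwr
  obtain ⟨u₁, hu₁adj, hu₁⟩ := second_vertex H (Q.takeUntil w hw).reverse hwp
  have hu₁t : u₁ ∈ (Q.takeUntil w hw).support := by
    have h := List.mem_of_mem_tail hu₁
    rwa [Walk.support_reverse, List.mem_reverse] at h
  have hnd : ((Q.takeUntil w hw).support ++ (Q.dropUntil w hw).support.tail).Nodup := by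
    have h := hQ.support_nodup
    rwa [← Walk.take_spec Q hw, Walk.support_append] at h
  have hne : u₁ ≠ u₂ := by
    rintro rfl
    exact (List.disjoint_of_nodup_append hnd) hu₁t hu₂
  have hsub : ({u₁, u₂} : Finset V) ⊆ H.neighborFinset w := by
    intro t ht
    simp only [Finset.mem_insert, Finset.mem_singleton] at ht
    rw [SimpleGraph.mem_neighborFinset]
    rcases ht with rfl | rfl <;> assumption
  calc 2 = ({u₁, u₂} : Finset V).card := (Finset.card_pair hne).symm
    _ ≤ (H.neighborFinset w).card := Finset.card_le_card hsub
    _ = H.degree w := SimpleGraph.card_neighborFinset_eq_degree _ _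

lemma deg3 (H : SimpleGraph V) [DecidableRel H.Adj] (h2 : ∀ w, H.degree w ≤ 2)
    {p q r : V} (hpq : p ≠ q) (hpr : p ≠ r) (hqr : q ≠ r)
    (h1p : H.degree p ≤ 1) (h1q : H.degree q ≤ 1) (h1r : H.degree r ≤ 1)
    (hq : H.Reachable p q) (hr : H.Reachable p r) : False := by
  obtain ⟨P⟩ := hq
  obtain ⟨Q⟩ := hr
  rcases le_total P.bypass.length Q.bypass.length with hle | hle
  · have hpre := force H h2 h1p P.bypass Q.bypass P.bypass_isPath Q.bypass_isPath hle
    have hmem : q ∈ Q.bypass.support := hpre.subset P.bypass.end_mem_support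
    have := interior H Q.bypass Q.bypass_isPath hmem hpq.symm hqr
    omega
  · have hpre := force H h2 h1p Q.bypass P.bypass Q.bypass_isPath P.bypass_isPath hle
    have hmem : r ∈ P.bypass.support := hpre.subset Q.bypass.end_mem_support
    have := interior H P.bypass P.bypass_isPath hmem hpr.symm hqr.symm
    omega


/-- The fan relation: the edge `x y'` is colored with a color free at `y`. -/
def FanRel (C : VPC G n) (x : V) (y y' : V) : Prop :=
  ∃ a, C.col x y' = some a ∧ VFree C a y

/-- A (Vizing) fan at `x`, starting at an uncolored edge. -/
structure IsVFan (C : VPC G n) (x : V) (L : List V) : Prop where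
  ne : L ≠ []
  adj : ∀ y ∈ L, G.Adj x y
  nodup : L.Nodup
  headc : C.col x (L.head ne) = none
  chain : L.IsChain (FanRel C x)

lemma chain'_imp_mem {α : Type*} {R S : α → α → Prop} :
    ∀ (l : List α), (∀ w ∈ l, ∀ w' ∈ l, R w w' → S w w') → l.IsChain R → l.IsChain S := by
  intro l
  induction l with
  | nil => intro _ _; exact List.isChain_nil
  | cons a l ih =>
    intro h hc
    rw [List.isChain_cons] at hc ⊢
    refine ⟨?_, ih (fun w hw w' hw' => h w (by simp [hw]) w' (by simp [hw'])) hc.2⟩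
    intro c hc'
    exact h a (by simp) c (by simp [List.mem_of_mem_head? hc']) (hc.1 c hc')

/-- Rotating a fan: shift colors along the fan and color its last edge with `b`. -/
lemma rotate (x : V) : ∀ (L : List V) (C : VPC G n) (hfan : IsVFan C x L) (b : Fin n),
    VFree C b x → VFree C b (L.getLast hfan.ne) →
    ∃ C' : VPC G n, (∀ u v, C.col u v ≠ none → C'.col u v ≠ none) ∧
      C'.col x (L.head hfan.ne) ≠ none := by
  intro L
  induction L with
  | nil => intro C hfan; exact absurd rfl hfan.ne
  | cons y T ih =>
    intro C hfan b hbx hbl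
    have hyx : y ≠ x := (hfan.adj y (by simp)).ne'
    cases T with
    | nil =>
      have hbl' : VFree C b y := by simpa using hbl
      obtain ⟨C', hxy, hunch⟩ := assign C x y b hfan.headc (hfan.adj y (by simp)) hbx hbl'
      refine ⟨C', ?_, ?_⟩
      · intro u v h
        by_cases hc : s(u,v) = s(x,y)
        · rw [Sym2.eq_iff] at hc
          rcases hc with ⟨rfl, rfl⟩ | ⟨rfl, rfl⟩
          · rw [hxy]; simp
          · rw [C'.symm, hxy]; simp
        · rw [hunch u v hc]; exact h
      · show C'.col x y ≠ none
        rw [hxy]; simp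
    | cons y1 T' =>
      obtain ⟨⟨a1, ha1, hfa1⟩, hchainT⟩ := List.isChain_cons_cons.mp hfan.chain
      have hy1x : y1 ≠ x := (hfan.adj y1 (by simp)).ne'
      have hynotmem : y ∉ (y1 :: T') := (List.nodup_cons.mp hfan.nodup).1
      have hnd1 : (y1 :: T').Nodup := (List.nodup_cons.mp hfan.nodup).2
      obtain ⟨C₁, h1xy, h1xz, h1un⟩ :=
        move C x y y1 a1 hfan.headc (hfan.adj y (by simp)) ha1 hfa1
      -- freeness is preserved away from x and y
      have hpres : ∀ w, w ≠ x → w ≠ y → ∀ (c : Fin n), VFree C c w → VFree C₁ c w := by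
        intro w hwx hwy c hf v
        by_cases hc : s(w,v) = s(x,y)
        · rw [Sym2.eq_iff] at hc
          rcases hc with ⟨rfl, rfl⟩ | ⟨rfl, rfl⟩
          · exact absurd rfl hwx
          · exact absurd rfl hwy
        · by_cases hc2 : s(w,v) = s(x,y1)
          · rw [Sym2.eq_iff] at hc2
            rcases hc2 with ⟨rfl, rfl⟩ | ⟨rfl, rfl⟩
            · exact absurd rfl hwx
            · rw [C₁.symm, h1xz]; simp
          · rw [h1un w v hc hc2]; exact hf v
      have hcol_unch : ∀ w', w' ∈ T' → C₁.col x w' = C.col x w' := by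
        intro w' hw'
        have h1 : w' ≠ y := fun h => hynotmem (h ▸ List.mem_cons_of_mem _ hw')
        have h2 : w' ≠ y1 := fun h => (List.nodup_cons.mp hnd1).1 (h ▸ hw')
        refine h1un x w' ?_ ?_
        · intro hc
          rw [Sym2.eq_iff] at hc
          rcases hc with ⟨-, h⟩ | ⟨h, -⟩
          · exact h1 h
          · exact hyx h.symm
        · intro hc
          rw [Sym2.eq_iff] at hc
          rcases hc with ⟨-, h⟩ | ⟨h, -⟩
          · exact h2 h
          · exact hy1x h.symm
      have htrans : ∀ (w : V), w ∈ (y1 :: T') → ∀ w' ∈ T',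
          FanRel C x w w' → FanRel C₁ x w w' := by
        rintro w hw w' hw' ⟨c, hc, hfc⟩
        exact ⟨c, by rw [hcol_unch w' hw']; exact hc,
          hpres w (hfan.adj w (List.mem_cons_of_mem _ hw)).ne' (fun h => hynotmem (h ▸ hw)) c hfc⟩
      have hfan1 : IsVFan C₁ x (y1 :: T') := by
        refine ⟨by simp, fun w hw => hfan.adj w (List.mem_cons_of_mem _ hw), hnd1, ?_, ?_⟩
        · simpa using h1xz
        · rw [List.isChain_cons]
          obtain ⟨hhead, htail⟩ := List.isChain_cons.mp hchainT
          refine ⟨?_, ?_⟩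
          · intro c hc'
            exact htrans y1 (by simp) c (List.mem_of_mem_head? hc') (hhead c hc')
          · exact chain'_imp_mem T'
              (fun w hw w' hw' => htrans w (List.mem_cons_of_mem _ hw) w' hw') htail
      have hbx1 : VFree C₁ b x := by
        intro v
        by_cases hc : s(x,v) = s(x,y)
        · rw [Sym2.eq_iff] at hc
          rcases hc with ⟨-, rfl⟩ | ⟨h, -⟩
          · rw [h1xy]
            have ha1b : a1 ≠ b := fun h => hbx y1 (h ▸ ha1)
            simp [ha1b]
          · exact absurd h.symm hyx
        · by_cases hc2 : s(x,v) = s(x,y1)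
          · rw [Sym2.eq_iff] at hc2
            rcases hc2 with ⟨-, rfl⟩ | ⟨h, -⟩
            · rw [h1xz]; simp
            · exact absurd h.symm hy1x
          · rw [h1un x v hc hc2]; exact hbx v
      have hlast : (y :: y1 :: T').getLast hfan.ne = (y1 :: T').getLast (by simp) :=
        List.getLast_cons (by simp)
      have hbl1 : VFree C₁ b ((y1 :: T').getLast (by simp)) := by
        have hmem : (y1 :: T').getLast (by simp) ∈ (y1 :: T') := List.getLast_mem _
        refine hpres _ (hfan.adj _ (List.mem_cons_of_mem _ hmem)).ne'
          (fun h => hynotmem (h ▸ hmem)) b ?_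
        rw [← hlast]; exact hbl
      obtain ⟨C₂, hp2, hh2⟩ := ih C₁ hfan1 b hbx1 hbl1
      have hh2' : C₂.col x y1 ≠ none := hh2
      refine ⟨C₂, ?_, ?_⟩
      · intro u v h
        by_cases hc : s(u,v) = s(x,y1)
        · rw [Sym2.eq_iff] at hc
          rcases hc with ⟨rfl, rfl⟩ | ⟨rfl, rfl⟩
          · exact hh2'
          · rw [C₂.symm]; exact hh2'
        · by_cases hc2 : s(u,v) = s(x,y)
          · rw [Sym2.eq_iff] at hc2
            rcases hc2 with ⟨rfl, rfl⟩ | ⟨rfl, rfl⟩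
            · exact hp2 _ _ (by rw [h1xy]; simp)
            · exact hp2 _ _ (by rw [C₁.symm, h1xy]; simp)
          · exact hp2 u v (by rw [h1un u v hc2 hc]; exact h)
      · show C₂.col x y ≠ none
        exact hp2 x y (by rw [h1xy]; simp)


/-- There is a maximal fan starting at the uncolored edge `xy`. -/
lemma exists_max_fan (C : VPC G n) (x y : V) (hadj : G.Adj x y) (hnone : C.col x y = none) :
    ∃ (L : List V) (hfan : IsVFan C x L), L.head hfan.ne = y ∧
      ∀ u (b : Fin n), C.col x u = some b → VFree C b (L.getLast hfan.ne) → u ∈ L := by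
  suffices h : ∀ (k : ℕ) (L : List V) (hfan : IsVFan C x L), L.head hfan.ne = y →
      Fintype.card V - L.length ≤ k →
      ∃ (L' : List V) (hfan' : IsVFan C x L'), L'.head hfan'.ne = y ∧
        ∀ u (b : Fin n), C.col x u = some b → VFree C b (L'.getLast hfan'.ne) → u ∈ L' by
    have hfan0 : IsVFan C x [y] :=
      ⟨by simp, by simpa using hadj, by simp, by simpa using hnone, by simp⟩
    exact h (Fintype.card V) [y] hfan0 rfl (by omega)
  intro k
  induction k with
  | zero =>
    intro L hfan hhead hk
    refine ⟨L, hfan, hhead, ?_⟩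
    intro u b hcol hfree
    have hlen : L.length ≤ Fintype.card V := List.Nodup.length_le_card hfan.nodup
    have huniv : L.toFinset = Finset.univ :=
      Finset.eq_univ_of_card _ (by rw [List.toFinset_card_of_nodup hfan.nodup]; omega)
    rw [← List.mem_toFinset, huniv]
    exact Finset.mem_univ u
  | succ k ihk =>
    intro L hfan hhead hk
    by_cases hmax : ∀ u (b : Fin n), C.col x u = some b →
        VFree C b (L.getLast hfan.ne) → u ∈ L
    · exact ⟨L, hfan, hhead, hmax⟩
    · push_neg at hmax
      obtain ⟨u, b, hcol, hfree, hnotmem⟩ := hmax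
      have hLne : L ≠ [] := hfan.ne
      have hfan' : IsVFan C x (L ++ [u]) := by
        refine ⟨by simp, ?_, ?_, ?_, ?_⟩
        · intro w hw
          rw [List.mem_append] at hw
          rcases hw with h | h
          · exact hfan.adj w h
          · rw [List.mem_singleton] at h
            exact h ▸ C.adj x u (by rw [hcol]; simp)
        · rw [List.nodup_append]
          refine ⟨hfan.nodup, List.nodup_singleton u, ?_⟩
          intro a ha
          simp only [List.mem_singleton]
          rintro _ rfl rfl
          exact hnotmem ha
        · rw [List.head_append_left hLne]
          exact hfan.headc
        · rw [List.isChain_append]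
          refine ⟨hfan.chain, List.isChain_singleton u, ?_⟩
          intro p hp q hq
          rw [List.getLast?_eq_getLast_of_ne_nil hLne, Option.mem_some_iff] at hp
          simp only [List.head?_cons, Option.mem_some_iff] at hq
          subst hp; subst hq
          exact ⟨b, hcol, hfree⟩
      have hlen' : (L ++ [u]).length ≤ Fintype.card V := List.Nodup.length_le_card hfan'.nodup
      refine ihk (L ++ [u]) hfan' ?_ ?_
      · rw [List.head_append_left hLne]; exact hhead
      · simp only [List.length_append, List.length_singleton] at *
        omega


/-- Vizing's extension step: any uncolored edge can be colored after recoloring. -/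
lemma extend (C : VPC G n) (hfree : ∀ w, ∃ a : Fin n, VFree C a w) (x y : V)
    (hadj : G.Adj x y) (hnone : C.col x y = none) :
    ∃ C' : VPC G n, (∀ u v, C.col u v ≠ none → C'.col u v ≠ none) ∧ C'.col x y ≠ none := by
  obtain ⟨L, hfan, hhead, hmax⟩ := exists_max_fan C x y hadj hnone
  obtain ⟨b, hb⟩ := hfree (L.getLast hfan.ne)
  by_cases hbx : VFree C b x
  · obtain ⟨C', hp, hh⟩ := rotate x L C hfan b hbx hb
    exact ⟨C', hp, by rw [← hhead]; exact hh⟩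
  · have hbx' : ∃ w0, C.col x w0 = some b := by
      by_contra h
      push_neg at h
      exact hbx (fun v => h v)
    obtain ⟨u, hu⟩ := hbx'
    have humem : u ∈ L := hmax u b hu hb
    obtain ⟨P, s, rfl⟩ := List.append_of_mem humem
    have hPne : P ≠ [] := by
      rintro rfl
      have h := hhead
      simp only [List.nil_append, List.head_cons] at h
      rw [h, hnone] at hu
      exact absurd hu (by simp)
    -- `last` and `prev` are abbreviations
    have hlastmem' : ((P ++ u :: s).getLast hfan.ne) ∈ (u :: s) := by
      rw [List.getLast_append_of_ne_nil _ (by simp)]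
      exact List.getLast_mem _
    have hrel : FanRel C x (P.getLast hPne) u := by
      have hch := hfan.chain
      rw [List.isChain_append] at hch
      exact hch.2.2 (P.getLast hPne)
        (by rw [List.getLast?_eq_getLast_of_ne_nil hPne]; rfl) u rfl
    obtain ⟨b', hb'', hfb''⟩ := hrel
    have hb'b : b' = b := by
      rw [hu] at hb''
      exact (Option.some_inj.mp hb'').symm
    have hfb' : VFree C b (P.getLast hPne) := hb'b ▸ hfb''
    obtain ⟨a, ha⟩ := hfree x
    have hab : a ≠ b := fun h => ha u (h ▸ hu)
    set H := abGraph C a b with hHdef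
    have hH2 : ∀ w, H.degree w ≤ 2 := ab_deg_le_two C a b
    have hHx : H.degree x ≤ 1 := ab_deg_le_one_left C a b x ha
    have hHprev : H.degree (P.getLast hPne) ≤ 1 := ab_deg_le_one_right C a b _ hfb'
    have hHlast : H.degree ((P ++ u :: s).getLast hfan.ne) ≤ 1 := ab_deg_le_one_right C a b _ hb
    have hndL := hfan.nodup
    rw [List.nodup_append] at hndL
    obtain ⟨hndP, hndUS, hdisj⟩ := hndL
    have hu_not_P : u ∉ P := fun h => hdisj _ h _ (by simp) rfl
    have hu_not_s : u ∉ s := (List.nodup_cons.mp hndUS).1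
    have hprevmem : P.getLast hPne ∈ P ++ u :: s :=
      List.mem_append_left _ (List.getLast_mem _)
    have hlastmem : (P ++ u :: s).getLast hfan.ne ∈ P ++ u :: s := List.getLast_mem _
    have hprevx : P.getLast hPne ≠ x := (hfan.adj _ hprevmem).ne'
    have hlastx : (P ++ u :: s).getLast hfan.ne ≠ x := (hfan.adj _ hlastmem).ne'
    have hprevlast : P.getLast hPne ≠ (P ++ u :: s).getLast hfan.ne := by
      intro h
      exact hdisj _ (List.getLast_mem hPne) _ hlastmem' h
    by_cases hreach : H.Reachable x (P.getLast hPne)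
    · -- Case B : flip the component of `last`, rotate the whole fan with color `a`.
      have hnre : ¬ H.Reachable x ((P ++ u :: s).getLast hfan.ne) := fun h =>
        deg3 H hH2 hprevx.symm hlastx.symm hprevlast hHx hHprev hHlast hreach h
      obtain ⟨C₁, hch1, hch2⟩ := flip C a b ((P ++ u :: s).getLast hfan.ne)
      have hxn : ¬ H.Reachable ((P ++ u :: s).getLast hfan.ne) x := fun h => hnre h.symm
      have hprevn : ¬ H.Reachable ((P ++ u :: s).getLast hfan.ne) (P.getLast hPne) :=
        fun h => hnre (hreach.trans h.symm)
      have hxcol : ∀ v, C₁.col x v = C.col x v := fun v => hch1 x v hxn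
      have hfa_last : VFree C₁ a ((P ++ u :: s).getLast hfan.ne) := by
        intro v
        rw [hch2 _ v (SimpleGraph.Reachable.refl _)]
        intro hcon
        rw [Option.map_eq_some_iff] at hcon
        obtain ⟨c, hc, hc2⟩ := hcon
        have h3 := congrArg (Equiv.swap a b) hc2
        rw [Equiv.swap_apply_self, Equiv.swap_apply_left] at h3
        exact hb v (h3 ▸ hc)
      have hfa_x : VFree C₁ a x := fun v => by rw [hxcol v]; exact ha v
      have hfb_prev : VFree C₁ b (P.getLast hPne) :=
        fun v => by rw [hch1 _ v hprevn]; exact hfb' v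
      have hfree_pres : ∀ w (c : Fin n), c ≠ a → c ≠ b → VFree C c w → VFree C₁ c w := by
        intro w c hca hcb hf v
        by_cases hr : H.Reachable ((P ++ u :: s).getLast hfan.ne) w
        · rw [hch2 w v hr]
          intro hcon
          rw [Option.map_eq_some_iff] at hcon
          obtain ⟨c', hc', hc2⟩ := hcon
          have h3 := congrArg (Equiv.swap a b) hc2
          rw [Equiv.swap_apply_self, Equiv.swap_apply_of_ne_of_ne hca hcb] at h3
          exact hf v (h3 ▸ hc')
        · rw [hch1 w v hr]; exact hf v
      have htrans : ∀ w w', w' ≠ u → FanRel C x w w' → FanRel C₁ x w w' := by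
        rintro w w' hne ⟨c, hc, hfc⟩
        have hca : c ≠ a := fun h => ha w' (h ▸ hc)
        have hcb : c ≠ b := fun h => hne (C.proper x w' u c hc (by rw [hu, h]))
        exact ⟨c, by rw [hxcol]; exact hc, hfree_pres w c hca hcb hfc⟩
      have hchainB : (P ++ u :: s).IsChain (FanRel C₁ x) := by
        have hchL := hfan.chain
        rw [List.isChain_append] at hchL ⊢
        obtain ⟨hcP, hcUS, hrel'⟩ := hchL
        refine ⟨?_, ?_, ?_⟩
        · exact chain'_imp_mem P
            (fun w hw w' hw' => htrans w w' (fun h => hu_not_P (h ▸ hw'))) hcP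
        · obtain ⟨hh, ht⟩ := List.isChain_cons.mp hcUS
          refine List.isChain_cons.mpr ⟨?_, ?_⟩
          · intro c hc'
            exact htrans u c
              (fun h => hu_not_s (h ▸ List.mem_of_mem_head? hc')) (hh c hc')
          · exact chain'_imp_mem s
              (fun w hw w' hw' => htrans w w' (fun h => hu_not_s (h ▸ hw'))) ht
        · intro p hp q hq
          rw [List.getLast?_eq_getLast_of_ne_nil hPne, Option.mem_some_iff] at hp
          simp only [List.head?_cons, Option.mem_some_iff] at hq
          subst hp; subst hq
          exact ⟨b, by rw [hxcol]; exact hu, hfb_prev⟩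
      have hfan1 : IsVFan C₁ x (P ++ u :: s) :=
        ⟨hfan.ne, hfan.adj, hfan.nodup, by rw [hxcol]; exact hfan.headc, hchainB⟩
      obtain ⟨C₂, hp2, hh2⟩ := rotate x (P ++ u :: s) C₁ hfan1 a hfa_x hfa_last
      refine ⟨C₂, ?_, ?_⟩
      · intro u' v' h
        apply hp2
        by_cases hr : H.Reachable ((P ++ u :: s).getLast hfan.ne) u'
        · rw [hch2 u' v' hr]
          intro hcon
          rw [Option.map_eq_none_iff] at hcon
          exact h hcon
        · rw [hch1 u' v' hr]; exact h
      · rw [← hhead]; exact hh2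
    · -- Case A : flip the component of `prev`, rotate the truncated fan `P` with color `a`.
      obtain ⟨C₁, hch1, hch2⟩ := flip C a b (P.getLast hPne)
      have hxn : ¬ H.Reachable (P.getLast hPne) x := fun h => hreach h.symm
      have hxcol : ∀ v, C₁.col x v = C.col x v := fun v => hch1 x v hxn
      have hfa_prev : VFree C₁ a (P.getLast hPne) := by
        intro v
        rw [hch2 _ v (SimpleGraph.Reachable.refl _)]
        intro hcon
        rw [Option.map_eq_some_iff] at hcon
        obtain ⟨c, hc, hc2⟩ := hcon
        have h3 := congrArg (Equiv.swap a b) hc2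
        rw [Equiv.swap_apply_self, Equiv.swap_apply_left] at h3
        exact hfb' v (h3 ▸ hc)
      have hfa_x : VFree C₁ a x := fun v => by rw [hxcol v]; exact ha v
      have hfree_pres : ∀ w (c : Fin n), c ≠ a → c ≠ b → VFree C c w → VFree C₁ c w := by
        intro w c hca hcb hf v
        by_cases hr : H.Reachable (P.getLast hPne) w
        · rw [hch2 w v hr]
          intro hcon
          rw [Option.map_eq_some_iff] at hcon
          obtain ⟨c', hc', hc2⟩ := hcon
          have h3 := congrArg (Equiv.swap a b) hc2
          rw [Equiv.swap_apply_self, Equiv.swap_apply_of_ne_of_ne hca hcb] at h3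
          exact hf v (h3 ▸ hc')
        · rw [hch1 w v hr]; exact hf v
      have htrans : ∀ w w', w' ≠ u → FanRel C x w w' → FanRel C₁ x w w' := by
        rintro w w' hne ⟨c, hc, hfc⟩
        have hca : c ≠ a := fun h => ha w' (h ▸ hc)
        have hcb : c ≠ b := fun h => hne (C.proper x w' u c hc (by rw [hu, h]))
        exact ⟨c, by rw [hxcol]; exact hc, hfree_pres w c hca hcb hfc⟩
      have hheadP : P.head hPne = y := by
        rw [← hhead, List.head_append_left hPne]
      have hfan1 : IsVFan C₁ x P := by
        refine ⟨hPne, fun w hw => hfan.adj w (List.mem_append_left _ hw), hndP, ?_, ?_⟩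
        · rw [hxcol, hheadP]
          rw [← hheadP] at hnone ⊢
          exact hnone
        · have hcP := (List.isChain_append.mp hfan.chain).1
          exact chain'_imp_mem P
            (fun w hw w' hw' => htrans w w' (fun h => hu_not_P (h ▸ hw'))) hcP
      obtain ⟨C₂, hp2, hh2⟩ := rotate x P C₁ hfan1 a hfa_x hfa_prev
      refine ⟨C₂, ?_, ?_⟩
      · intro u' v' h
        apply hp2
        by_cases hr : H.Reachable (P.getLast hPne) u'
        · rw [hch2 u' v' hr]
          intro hcon
          rw [Option.map_eq_none_iff] at hcon
          exact h hcon
        · rw [hch1 u' v' hr]; exact h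
      · rw [← hheadP]; exact hh2


/-- A total proper edge coloring with `d+1` colors exists (Vizing's theorem). -/
lemma total_coloring {d : ℕ} (hd : ∀ v, G.degree v ≤ d) :
    ∃ C : VPC G (d+1), ∀ u v, G.Adj u v → C.col u v ≠ none := by
  classical
  suffices h : ∀ (k : ℕ) (C : VPC G (d+1)),
      (Finset.univ.filter (fun p : V × V => G.Adj p.1 p.2 ∧ C.col p.1 p.2 = none)).card ≤ k →
      ∃ C' : VPC G (d+1), ∀ u v, G.Adj u v → C'.col u v ≠ none by
    have C0 : VPC G (d+1) :=
      ⟨fun _ _ => none, fun _ _ => rfl, fun u v h => absurd rfl h, fun u v w a h => by simp at h⟩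
    exact h _ C0 le_rfl
  intro k
  induction k with
  | zero =>
    intro C hc
    refine ⟨C, fun u v huv => ?_⟩
    intro h
    have hmem : (u, v) ∈ Finset.univ.filter
        (fun p : V × V => G.Adj p.1 p.2 ∧ C.col p.1 p.2 = none) :=
      Finset.mem_filter.mpr ⟨Finset.mem_univ _, huv, h⟩
    have := Finset.card_pos.mpr ⟨(u, v), hmem⟩
    omega
  | succ k ih =>
    intro C hc
    by_cases hall : ∀ u v, G.Adj u v → C.col u v ≠ none
    · exact ⟨C, hall⟩
    · push_neg at hall
      obtain ⟨u, v, huv, hnone⟩ := hall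
      have hfree : ∀ w, ∃ a, VFree C a w := fun w => exists_free C w (hd w)
      obtain ⟨C', hpres, hcol⟩ := extend C hfree u v huv hnone
      apply ih C'
      have hmem : (u, v) ∈ Finset.univ.filter
          (fun p : V × V => G.Adj p.1 p.2 ∧ C.col p.1 p.2 = none) :=
        Finset.mem_filter.mpr ⟨Finset.mem_univ _, huv, hnone⟩
      have hsub : (Finset.univ.filter
            (fun p : V × V => G.Adj p.1 p.2 ∧ C'.col p.1 p.2 = none)) ⊆
          (Finset.univ.filter
            (fun p : V × V => G.Adj p.1 p.2 ∧ C.col p.1 p.2 = none)).erase (u, v) := by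
        intro p hp
        rw [Finset.mem_filter] at hp
        obtain ⟨-, hp1, hp2⟩ := hp
        rw [Finset.mem_erase, Finset.mem_filter]
        refine ⟨?_, Finset.mem_univ _, hp1, ?_⟩
        · rintro rfl
          exact hcol hp2
        · by_contra h
          exact hpres p.1 p.2 h hp2
      have h1 := Finset.card_le_card hsub
      have h2 := Finset.card_erase_of_mem hmem
      have h3 := Finset.card_pos.mpr ⟨(u, v), hmem⟩
      omega

end Vizing

/-- Vizing-type statement: the edge set of a graph of maximum degree `d` can be
partitioned into at most `d + 1` matchings (the color classes of a proper edge
coloring). -/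
theorem stmt_12 {V : Type*} [Fintype V] [DecidableEq V] (G : SimpleGraph V)
    [DecidableRel G.Adj] (d : ℕ) (hd : ∀ v, G.degree v ≤ d) :
    ∃ f : Sym2 V → Fin (d + 1),
      ∀ e₁ ∈ G.edgeSet, ∀ e₂ ∈ G.edgeSet,
        f e₁ = f e₂ → e₁ ≠ e₂ → ∀ v : V, v ∈ e₁ → v ∉ e₂ := by
  classical
  obtain ⟨C, hC⟩ := Vizing.total_coloring (G := G) hd
  refine ⟨Sym2.lift ⟨fun u v => (C.col u v).getD ⟨0, Nat.succ_pos d⟩,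
    fun u v => by simp only []; rw [C.symm]⟩, ?_⟩
  intro e₁ he₁ e₂ he₂ hf hne v hv1 hv2
  rw [Sym2.mem_iff_exists] at hv1 hv2
  obtain ⟨w1, rfl⟩ := hv1
  obtain ⟨w2, rfl⟩ := hv2
  rw [SimpleGraph.mem_edgeSet] at he₁ he₂
  have h1 := hC v w1 he₁
  have h2 := hC v w2 he₂
  obtain ⟨c1, hc1⟩ := Option.ne_none_iff_exists'.mp h1
  obtain ⟨c2, hc2⟩ := Option.ne_none_iff_exists'.mp h2
  rw [Sym2.lift_mk, Sym2.lift_mk] at hf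
  simp only [hc1, hc2, Option.getD_some] at hf
  subst hf
  exact hne (by rw [C.proper v w1 w2 c1 hc1 hc2])
end

section
/- Consider the flow network built from a partition matroid with partition E = E₁ ∪ ... ∪ E_r over T timesteps: nodes v_{e,t} for e ∈ E, t ∈ [T], arcs (v_{e,t}, v_{e',t+1}) for e, e' in the same part E_i, a source s with unit-capacity arcs to nodes s_i and infinite-capacity arcs from s_i to each v_{e,1} with e ∈ E_i, and arcs from each v_{e,T} to sink t. Then integral s–t flows of value r are in cost-preserving bijection with feasible solutions of the multistage matroid maintenance problem for the partition matroid, where the cost of a solution (B₁,...,B_T) is ∑_t (c_t(B_t) + ∑_{e ∈ B_t \ B_{t-1}} w(e)), B₀ = ∅, and each B_t picks exactly one element from each part E_i. -/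
/-- Nodes of the min-cost-flow network for the partition matroid over `T` timesteps. -/
inductive FNode (E : Type) (r T : ℕ) : Type
  | src : FNode E r T
  | snk : FNode E r T
  | part (i : Fin r) : FNode E r T
  | elt (e : E) (t : Fin T) : FNode E r T
  deriving DecidableEq

noncomputable instance {E : Type} [Fintype E] [DecidableEq E] (r T : ℕ) : Fintype (FNode E r T) := by
  classical
  exact Fintype.ofInjective
    (fun n : FNode E r T =>
      match n with
      | .src => (Sum.inl true : Bool ⊕ (Fin r ⊕ E × Fin T))
      | .snk => Sum.inl false
      | .part i => Sum.inr (Sum.inl i)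
      | .elt e t => Sum.inr (Sum.inr (e, t)))
    (by rintro ⟨⟩ ⟨⟩ h <;> simp_all)

variable {E : Type}

/-- The arcs of the network: `src → partᵢ`; `partᵢ → (e,1)` for `e ∈ Eᵢ`;
`(e,t) → (e',t+1)` for `e, e'` in the same part; `(e,T) → snk`. -/
def isArc (r T : ℕ) (part : E → Fin r) : FNode E r T → FNode E r T → Prop
  | .src, .part _ => True
  | .part i, .elt e t => part e = i ∧ (t : ℕ) = 0
  | .elt e t, .elt e' t' => part e = part e' ∧ (t' : ℕ) = (t : ℕ) + 1
  | .elt _ t, .snk => (t : ℕ) = T - 1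
  | _, _ => False

/-- `f` is an integral `src`–`snk` flow of value `r`: supported on arcs, unit
capacities on the arcs `src → partᵢ`, conservation at internal nodes, value `r`. -/
def IsFlow [Fintype E] [DecidableEq E] (r T : ℕ) (part : E → Fin r)
    (f : FNode E r T → FNode E r T → ℕ) : Prop :=
  (∀ u v, f u v ≠ 0 → isArc r T part u v) ∧
  (∀ i : Fin r, f .src (.part i) ≤ 1) ∧
  (∀ v : FNode E r T, v ≠ .src → v ≠ .snk → ∑ u, f u v = ∑ u, f v u) ∧
  (∑ i : Fin r, f .src (.part i) = r)

/-- Per-unit arc costs: `w e` for the arcs `partᵢ → (e,1)`, and `w e'` for a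
"changing" arc `(e,t) → (e',t+1)` with `e ≠ e'`; all other arcs are free. -/
noncomputable def arcCost [DecidableEq E] (r T : ℕ) (w : E → ℝ) :
    FNode E r T → FNode E r T → ℝ
  | .part _, .elt e _ => w e
  | .elt e _, .elt e' _ => if e = e' then 0 else w e'
  | _, _ => 0

/-- The cost of a flow: arc costs plus the per-unit node cost `c t e` on the
flow through the node `(e,t)`. -/
noncomputable def flowCost [Fintype E] [DecidableEq E] (r T : ℕ) (w : E → ℝ)
    (c : ℕ → E → ℝ) (f : FNode E r T → FNode E r T → ℕ) : ℝ :=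
  (∑ u : FNode E r T, ∑ v : FNode E r T, (f u v : ℝ) * arcCost r T w u v) +
    ∑ e : E, ∑ t : Fin T, (∑ v : FNode E r T, (f (.elt e t) v : ℝ)) * c (t : ℕ) e

/-- `B` is a feasible solution of the multistage matroid maintenance problem for
the partition matroid: at each time `t < T` it picks exactly one element from
each part. -/
def IsFeasible (r T : ℕ) (part : E → Fin r) (B : ℕ → Finset E) : Prop :=
  (∀ t < T, ∀ i : Fin r, ∃! e, e ∈ B t ∧ part e = i) ∧ ∀ t, T ≤ t → B t = ∅

/-- The cost of a solution: holding costs plus acquisition costs of newly added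
elements (with `B₋₁ = ∅`, i.e. everything is acquired at time `0`). -/
noncomputable def solCost [DecidableEq E] (T : ℕ) (w : E → ℝ) (c : ℕ → E → ℝ)
    (B : ℕ → Finset E) : ℝ :=
  ∑ t ∈ Finset.range T,
    ((∑ e ∈ B t, c t e) + ∑ e ∈ B t \ (if t = 0 then ∅ else B (t - 1)), w e)

/-!
A flow of value `r` saturates every arc `src → partᵢ`, and since no arc leaves a part, flow
conservation pushes exactly one unit through each layer `{(e, t) | e ∈ Eᵢ}`. Hence every arc
carries 0 or 1 unit and the flow is the indicator of the arcs joining its active nodes, the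
`(e, t)` that carry flow; the active elements at each time form a feasible solution.
Conversely, the indicator flow of a feasible solution is a flow, and the two constructions are
inverse to each other. The node costs at time `t` are the holding costs `c_t(B_t)`, and the arcs
entering layer `t` cost `w(B_t \ B_{t-1})`: the arc into `(e, t)` comes from the element of
`e`'s part chosen at time `t - 1`, and is free exactly when that element is `e`.
-/

open Finset

theorem Finset.existsUnique_pos_of_sum_eq_one {α : Type*} {s : Finset α} {g : α → ℕ}
    (h : ∑ x ∈ s, g x = 1) : ∃! a, a ∈ s ∧ 0 < g a := by
  classical
  obtain ⟨a, ha, hga⟩ := exists_ne_zero_of_sum_ne_zero (h.trans_ne one_ne_zero)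
  refine ⟨a, ⟨ha, Nat.pos_of_ne_zero hga⟩, fun b ⟨hb, hgb⟩ => by_contra fun hne => ?_⟩
  have : g b + g a ≤ ∑ x ∈ s, g x := by
    rw [← sum_pair hne]
    exact sum_le_sum_of_subset (insert_subset hb (singleton_subset_iff.mpr ha))
  omega

theorem Finset.sum_fiber_sum_comm {α β M : Type*} [Fintype α] [DecidableEq β]
    [AddCommMonoid M] (p : α → β) (i : β) {g : α → α → M}
    (hg : ∀ a b, g a b ≠ 0 → p a = p b) :
    ∑ b with p b = i, ∑ a, g a b = ∑ a with p a = i, ∑ b, g a b := by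
  simp only [sum_filter, ite_sum_zero]
  rw [sum_comm]
  refine sum_congr rfl fun a _ => sum_congr rfl fun b _ => ?_
  by_cases h : g a b = 0
  · simp [h]
  · rw [hg a b h]

namespace FNode

variable {r T : ℕ}

def equivSum : Bool ⊕ (Fin r ⊕ E × Fin T) ≃ FNode E r T where
  toFun
    | .inl true => .src
    | .inl false => .snk
    | .inr (.inl i) => .part i
    | .inr (.inr (e, t)) => .elt e t
  invFun
    | .src => .inl true
    | .snk => .inl false
    | .part i => .inr (.inl i)
    | .elt e t => .inr (.inr (e, t))
  left_inv := by rintro ((_ | _) | i | ⟨e, t⟩) <;> rfl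
  right_inv := by rintro (_ | _ | i | ⟨e, t⟩) <;> rfl

theorem sum_univ [Fintype E] [DecidableEq E] {M : Type*} [AddCommMonoid M]
    (g : FNode E r T → M) :
    ∑ n, g n = g .src + g .snk + ∑ i, g (.part i) + ∑ e, ∑ t, g (.elt e t) := by
  rw [← Fintype.sum_equiv equivSum _ _ fun _ => rfl, Fintype.sum_sum_type,
    Fintype.sum_sum_type, Fintype.sum_prod_type, Fintype.sum_bool]
  simp only [equivSum, Equiv.coe_fn_mk, add_assoc]

end FNode

section Neighbourhoods

variable [Fintype E] [DecidableEq E] {r T : ℕ} {part : E → Fin r}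
  {M : Type*} [AddCommMonoid M] {g : FNode E r T → M}

theorem sum_eq_of_support_in_part {i : Fin r}
    (hg : ∀ u, g u ≠ 0 → isArc r T part u (.part i)) :
    ∑ u, g u = g .src :=
  Fintype.sum_eq_single _ fun u hu => by_contra fun h => by
    have harc := hg u h
    rcases u with _ | _ | j | ⟨e, t⟩ <;> simp [isArc] at harc hu

theorem sum_eq_of_support_in_elt_zero {e : E} {t : Fin T}
    (hg : ∀ u, g u ≠ 0 → isArc r T part u (.elt e t)) (ht : (t : ℕ) = 0) :
    ∑ u, g u = g (.part (part e)) :=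
  Fintype.sum_eq_single _ fun u hu => by_contra fun h => by
    have harc := hg u h
    rcases u with _ | _ | j | ⟨e', t'⟩ <;> simp [isArc] at harc hu
    · exact hu harc.1.symm
    · omega

theorem sum_eq_of_support_out_elt_last {e : E} {t : Fin T}
    (hg : ∀ v, g v ≠ 0 → isArc r T part (.elt e t) v) (ht : (t : ℕ) + 1 = T) :
    ∑ v, g v = g .snk :=
  Fintype.sum_eq_single _ fun v hv => by_contra fun h => by
    have harc := hg v h
    rcases v with _ | _ | j | ⟨e', t'⟩ <;> simp [isArc] at harc hv
    omega

theorem sum_eq_of_support_in_elt_succ {e : E} {t t' : Fin T}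
    (hg : ∀ u, g u ≠ 0 → isArc r T part u (.elt e t')) (ht : (t' : ℕ) = t + 1) :
    ∑ u, g u = ∑ e', g (.elt e' t) := by
  refine (Fintype.sum_of_injective (fun e' => (.elt e' t : FNode E r T))
    (fun _ _ h => by cases h; rfl) _ _ (fun u hu => by_contra fun h => ?_) fun _ => rfl).symm
  have harc := hg u h
  rcases u with _ | _ | j | ⟨e', s⟩ <;> simp [isArc] at harc hu
  · omega
  · exact hu (Fin.ext (by omega))

theorem sum_eq_of_support_out_elt_succ {e : E} {t t' : Fin T}
    (hg : ∀ v, g v ≠ 0 → isArc r T part (.elt e t) v) (ht : (t' : ℕ) = t + 1) :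
    ∑ v, g v = ∑ e', g (.elt e' t') := by
  refine (Fintype.sum_of_injective (fun e' => (.elt e' t' : FNode E r T))
    (fun _ _ h => by cases h; rfl) _ _ (fun v hv => by_contra fun h => ?_) fun _ => rfl).symm
  have harc := hg v h
  rcases v with _ | _ | j | ⟨e', s⟩ <;> simp [isArc] at harc hv
  · omega
  · exact hv (Fin.ext (by omega))

theorem sum_eq_of_support_out_part {i : Fin r} {t : Fin T}
    (hg : ∀ v, g v ≠ 0 → isArc r T part (.part i) v) (ht : (t : ℕ) = 0) :
    ∑ v, g v = ∑ e ∈ univ.filter (part · = i), g (.elt e t) := by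
  refine (sum_of_injOn (fun e => (.elt e t : FNode E r T)) (fun _ _ _ _ h => by cases h; rfl)
    (fun _ _ => mem_coe.mpr (mem_univ _)) (fun v _ hv => by_contra fun h => ?_)
    fun _ _ => rfl).symm
  have harc := hg v h
  rcases v with _ | _ | j | ⟨e', s⟩ <;> simp [isArc] at harc hv
  exact hv harc.1 (Fin.ext (by omega))

end Neighbourhoods

namespace IsFlow

variable [Fintype E] [DecidableEq E] {r T : ℕ} {part : E → Fin r}
  {f : FNode E r T → FNode E r T → ℕ}

theorem apply_src_part (hf : IsFlow r T part f) (i : Fin r) : f .src (.part i) = 1 := by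
  refine le_antisymm (hf.2.1 i) (Nat.one_le_iff_ne_zero.mpr fun h0 => ?_)
  have : ∑ j, f .src (.part j) < ∑ _j : Fin r, 1 :=
    sum_lt_sum (fun j _ => hf.2.1 j) ⟨i, mem_univ i, by omega⟩
  simp [hf.2.2.2] at this

theorem sum_in_elt (hf : IsFlow r T part f) (e : E) (t : Fin T) :
    ∑ u, f u (.elt e t) = ∑ v, f (.elt e t) v :=
  hf.2.2.1 _ (by simp) (by simp)

theorem sum_layer (hf : IsFlow r T part f) (t : Fin T) (i : Fin r) :
    ∑ e with part e = i, ∑ v, f (.elt e t) v = 1 := by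
  obtain ⟨n, hn⟩ := t
  induction n with
  | zero =>
    calc ∑ e with part e = i, ∑ v, f (.elt e ⟨0, hn⟩) v
        = ∑ e with part e = i, f (.part i) (.elt e ⟨0, hn⟩) := by
          refine sum_congr rfl fun e he => ?_
          rw [← hf.sum_in_elt, sum_eq_of_support_in_elt_zero (hf.1 · _) rfl,
            (mem_filter.mp he).2]
      _ = ∑ u, f u (.part i) := by
          rw [hf.2.2.1 _ (by simp) (by simp),
            sum_eq_of_support_out_part (t := ⟨0, hn⟩) (hf.1 _) rfl]
      _ = 1 := by rw [sum_eq_of_support_in_part (hf.1 · _), hf.apply_src_part]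
  | succ n ih =>
    have hn' : n < T := by omega
    calc ∑ e with part e = i, ∑ v, f (.elt e ⟨n + 1, hn⟩) v
        = ∑ e with part e = i, ∑ e', f (.elt e' ⟨n, hn'⟩) (.elt e ⟨n + 1, hn⟩) :=
          sum_congr rfl fun e _ => by
            rw [← hf.sum_in_elt,
              sum_eq_of_support_in_elt_succ (t := ⟨n, hn'⟩) (hf.1 · _) rfl]
      _ = ∑ e with part e = i, ∑ e', f (.elt e ⟨n, hn'⟩) (.elt e' ⟨n + 1, hn⟩) :=
          sum_fiber_sum_comm part i fun _ _ h => (hf.1 _ _ h).1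
      _ = ∑ e with part e = i, ∑ v, f (.elt e ⟨n, hn'⟩) v :=
          sum_congr rfl fun e _ => (sum_eq_of_support_out_elt_succ (hf.1 _) rfl).symm
      _ = 1 := ih hn'

theorem sum_out_elt_le_one (hf : IsFlow r T part f) (e : E) (t : Fin T) :
    ∑ v, f (.elt e t) v ≤ 1 :=
  (single_le_sum_of_canonicallyOrdered (f := fun e' => ∑ v, f (.elt e' t) v)
    (s := univ.filter (part · = part e)) (by simp)).trans_eq (hf.sum_layer t (part e))

theorem apply_le_one (hf : IsFlow r T part f) (u v : FNode E r T) : f u v ≤ 1 := by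
  have h_out : f u v ≤ ∑ v', f u v' := single_le_sum_of_canonicallyOrdered (mem_univ v)
  have h_in : f u v ≤ ∑ u', f u' v :=
    single_le_sum_of_canonicallyOrdered (f := (f · v)) (mem_univ u)
  by_cases harc : isArc r T part u v
  · rcases u with _ | _ | i | ⟨e, t⟩ <;> rcases v with _ | _ | j | ⟨e', t'⟩ <;>
      simp only [isArc] at harc
    · exact hf.2.1 j
    · exact h_in.trans ((hf.sum_in_elt e' t').trans_le (hf.sum_out_elt_le_one e' t'))
    all_goals exact h_out.trans (hf.sum_out_elt_le_one e t)
  · exact (not_ne_iff.mp (mt (hf.1 u v) harc)).trans_le zero_le_one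

end IsFlow

section SolutionOfFlow

variable [Fintype E] [DecidableEq E] {r T : ℕ} {part : E → Fin r}

noncomputable def solOfFlow (f : FNode E r T → FNode E r T → ℕ) (t : ℕ) : Finset E :=
  if h : t < T then univ.filter (fun e => 0 < ∑ v, f (.elt e ⟨t, h⟩) v) else ∅

theorem mem_solOfFlow {f : FNode E r T → FNode E r T → ℕ} (t : Fin T) {e : E} :
    e ∈ solOfFlow f t ↔ 0 < ∑ v, f (.elt e t) v := by
  simp [solOfFlow, t.isLt]

theorem IsFlow.isFeasible_solOfFlow {f : FNode E r T → FNode E r T → ℕ}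
    (hf : IsFlow r T part f) : IsFeasible r T part (solOfFlow f) := by
  refine ⟨fun t ht i => ?_, fun t ht => by simp [solOfFlow, ht.not_gt]⟩
  refine (existsUnique_congr fun e => ?_).mp
    (existsUnique_pos_of_sum_eq_one (hf.sum_layer ⟨t, ht⟩ i))
  rw [mem_solOfFlow ⟨t, ht⟩, mem_filter]
  simp [and_comm]

end SolutionOfFlow

section FlowOfSolution

variable [DecidableEq E] {r T : ℕ} {part : E → Fin r}

def IsActive (B : ℕ → Finset E) : FNode E r T → Prop
  | .elt e t => e ∈ B t
  | _ => True

instance (B : ℕ → Finset E) : DecidablePred (IsActive (r := r) (T := T) B) := fun u => by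
  cases u <;> unfold IsActive <;> infer_instance

instance : DecidableRel (isArc r T part) := fun u v => by
  cases u <;> cases v <;> unfold isArc <;> infer_instance

def flowOfSol (r T : ℕ) (part : E → Fin r) (B : ℕ → Finset E) (u v : FNode E r T) : ℕ :=
  if isArc r T part u v ∧ IsActive B u ∧ IsActive B v then 1 else 0

theorem isArc_of_flowOfSol_ne_zero {B : ℕ → Finset E} {u v : FNode E r T}
    (h : flowOfSol r T part B u v ≠ 0) :
    isArc r T part u v :=
  (ite_ne_right_iff.mp h).1.1

end FlowOfSolution

section Correspondence

variable [Fintype E] [DecidableEq E] {r T : ℕ} {part : E → Fin r} {B : ℕ → Finset E}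

theorem IsFeasible.card_filter_part (hB : IsFeasible r T part B) {t : ℕ} (ht : t < T)
    (i : Fin r) : #{e | part e = i ∧ e ∈ B t} = 1 :=
  (Fintype.existsUnique_iff_card_one _).mp <|
    (existsUnique_congr fun _ => and_comm).mp (hB.1 t ht i)

theorem IsFeasible.sum_out_elt_flowOfSol (hB : IsFeasible r T part B) (e : E) (t : Fin T) :
    ∑ v, flowOfSol r T part B (.elt e t) v = if e ∈ B t then 1 else 0 := by
  by_cases hlast : (t : ℕ) + 1 = T
  · rw [sum_eq_of_support_out_elt_last (fun _ => isArc_of_flowOfSol_ne_zero) hlast]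
    simp [flowOfSol, isArc, IsActive, show (t : ℕ) = T - 1 by omega]
  · have ht' : (t : ℕ) + 1 < T := by omega
    rw [sum_eq_of_support_out_elt_succ (t' := ⟨t + 1, ht'⟩)
      (fun _ => isArc_of_flowOfSol_ne_zero) rfl]
    by_cases he : e ∈ B t
    · simpa [flowOfSol, isArc, IsActive, he, eq_comm] using hB.card_filter_part ht' (part e)
    · simp [flowOfSol, isArc, IsActive, he]

theorem IsFeasible.sum_in_elt_flowOfSol (hB : IsFeasible r T part B) (e : E) (t : Fin T) :
    ∑ u, flowOfSol r T part B u (.elt e t) = if e ∈ B t then 1 else 0 := by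
  obtain ⟨_ | s, ht⟩ := t
  · rw [sum_eq_of_support_in_elt_zero (fun _ => isArc_of_flowOfSol_ne_zero) rfl]
    simp [flowOfSol, isArc, IsActive]
  · rw [sum_eq_of_support_in_elt_succ (t := ⟨s, by omega⟩)
      (fun _ => isArc_of_flowOfSol_ne_zero) rfl]
    by_cases he : e ∈ B (s + 1)
    · simpa [flowOfSol, isArc, IsActive, he] using
        hB.card_filter_part (t := s) (by omega) (part e)
    · simp [flowOfSol, isArc, IsActive, he]

theorem IsFeasible.sum_out_part_flowOfSol (hB : IsFeasible r T part B) (hT : 0 < T)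
    (i : Fin r) : ∑ v, flowOfSol r T part B (.part i) v = 1 := by
  rw [sum_eq_of_support_out_part (t := ⟨0, hT⟩) (fun _ => isArc_of_flowOfSol_ne_zero) rfl]
  simpa [flowOfSol, isArc, IsActive, filter_filter] using hB.card_filter_part hT i

theorem IsFeasible.isFlow_flowOfSol (hB : IsFeasible r T part B) (hT : 0 < T) :
    IsFlow r T part (flowOfSol r T part B) := by
  refine ⟨fun _ _ => isArc_of_flowOfSol_ne_zero, fun i => by simp [flowOfSol, isArc, IsActive],
    ?_, by simp [flowOfSol, isArc, IsActive]⟩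
  rintro (_ | _ | i | ⟨e, t⟩) hsrc hsnk
  · exact absurd rfl hsrc
  · exact absurd rfl hsnk
  · rw [hB.sum_out_part_flowOfSol hT,
      sum_eq_of_support_in_part fun _ => isArc_of_flowOfSol_ne_zero]
    simp [flowOfSol, isArc, IsActive]
  · rw [hB.sum_in_elt_flowOfSol, hB.sum_out_elt_flowOfSol]

theorem IsFeasible.solOfFlow_flowOfSol (hB : IsFeasible r T part B) :
    solOfFlow (flowOfSol r T part B) = B := by
  funext t
  by_cases ht : t < T
  · ext e
    rw [mem_solOfFlow ⟨t, ht⟩, hB.sum_out_elt_flowOfSol]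
    split_ifs <;> simp_all
  · simp [solOfFlow, ht, hB.2 t (not_lt.mp ht)]

theorem isActive_solOfFlow_of_ne_zero_left {f : FNode E r T → FNode E r T → ℕ}
    {u v : FNode E r T} (h : f u v ≠ 0) : IsActive (solOfFlow f) u := by
  cases u with
  | elt e t =>
    exact (mem_solOfFlow t).mpr
      ((Nat.pos_of_ne_zero h).trans_le (single_le_sum_of_canonicallyOrdered (mem_univ v)))
  | _ => trivial

namespace IsFlow

variable {f : FNode E r T → FNode E r T → ℕ}

theorem isActive_solOfFlow_of_ne_zero_right (hf : IsFlow r T part f) {u v : FNode E r T}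
    (h : f u v ≠ 0) : IsActive (solOfFlow f) v := by
  cases v with
  | elt e t =>
    refine (mem_solOfFlow t).mpr (hf.sum_in_elt e t ▸ (Nat.pos_of_ne_zero h).trans_le ?_)
    exact single_le_sum_of_canonicallyOrdered (f := (f · _)) (mem_univ u)
  | _ => trivial

theorem ne_zero_of_isArc (hf : IsFlow r T part f) {u v : FNode E r T}
    (harc : isArc r T part u v) (hu : IsActive (solOfFlow f) u) (hv : IsActive (solOfFlow f) v) :
    f u v ≠ 0 := by
  rcases u with _ | _ | i | ⟨e, t⟩ <;> rcases v with _ | _ | j | ⟨e', t'⟩ <;>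
    simp only [isArc] at harc
  · simp [hf.apply_src_part]
  · have hpos := (mem_solOfFlow t').mp hv
    rwa [← hf.sum_in_elt, sum_eq_of_support_in_elt_zero (hf.1 · _) harc.2, harc.1,
      Nat.pos_iff_ne_zero] at hpos
  · have hpos := (mem_solOfFlow t).mp hu
    rwa [sum_eq_of_support_out_elt_last (hf.1 _) (by omega), Nat.pos_iff_ne_zero] at hpos
  · have hpos := (mem_solOfFlow t).mp hu
    rw [sum_eq_of_support_out_elt_succ (hf.1 _) harc.2] at hpos
    -- The unit leaving `(e, t)` enters an active node of `e`'s part at time `t'`, and there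
    -- is only one such node.
    obtain ⟨e'', -, he''⟩ := exists_ne_zero_of_sum_ne_zero hpos.ne'
    obtain ⟨a, -, ha⟩ := hf.isFeasible_solOfFlow.1 t' t'.isLt (part e)
    have he''e' : e'' = e' :=
      (ha e'' ⟨hf.isActive_solOfFlow_of_ne_zero_right he'', (hf.1 _ _ he'').1.symm⟩).trans
        (ha e' ⟨hv, harc.1.symm⟩).symm
    exact he''e' ▸ he''

theorem flowOfSol_solOfFlow (hf : IsFlow r T part f) :
    flowOfSol r T part (solOfFlow f) = f := by
  funext u v
  have hle := hf.apply_le_one u v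
  unfold flowOfSol
  split_ifs with h
  · have := hf.ne_zero_of_isArc h.1 h.2.1 h.2.2
    omega
  · by_contra hne
    exact h ⟨hf.1 u v (Ne.symm hne), isActive_solOfFlow_of_ne_zero_left (Ne.symm hne),
      hf.isActive_solOfFlow_of_ne_zero_right (Ne.symm hne)⟩

end IsFlow

end Correspondence

section Cost

variable [Fintype E] [DecidableEq E] {r T : ℕ} {part : E → Fin r}

theorem sum_mul_arcCost_eq_sum_in_elt (f : FNode E r T → FNode E r T → ℕ) (w : E → ℝ) :
    ∑ u, ∑ v, (f u v : ℝ) * arcCost r T w u v =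
      ∑ t, ∑ e, ∑ u, (f u (.elt e t) : ℝ) * arcCost r T w u (.elt e t) := by
  have h_src (u : FNode E r T) : arcCost r T w u .src = 0 := by cases u <;> rfl
  have h_snk (u : FNode E r T) : arcCost r T w u .snk = 0 := by cases u <;> rfl
  have h_part (u : FNode E r T) (i : Fin r) : arcCost r T w u (.part i) = 0 := by
    cases u <;> rfl
  rw [sum_comm, FNode.sum_univ]
  simp only [h_src, h_snk, h_part, mul_zero, sum_const_zero, add_zero, zero_add]
  exact sum_comm

theorem IsFeasible.sum_in_elt_arcCost_flowOfSol {B : ℕ → Finset E}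
    (hB : IsFeasible r T part B) (w : E → ℝ) (t : Fin T) :
    ∑ e, ∑ u, (flowOfSol r T part B u (.elt e t) : ℝ) * arcCost r T w u (.elt e t) =
      ∑ e ∈ B t \ (if (t : ℕ) = 0 then ∅ else B (t - 1)), w e := by
  have hg (e : E) (u : FNode E r T)
      (h : (flowOfSol r T part B u (.elt e t) : ℝ) * arcCost r T w u (.elt e t) ≠ 0) :
      isArc r T part u (.elt e t) :=
    isArc_of_flowOfSol_ne_zero (Nat.cast_ne_zero.mp (left_ne_zero_of_mul h))
  obtain ⟨_ | s, ht⟩ := t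
  · simp_rw [sum_eq_of_support_in_elt_zero (hg _) rfl]
    simp [flowOfSol, isArc, IsActive, arcCost]
  · simp_rw [sum_eq_of_support_in_elt_succ (t := ⟨s, by omega⟩) (hg _) rfl]
    simp only [flowOfSol, isArc, IsActive, arcCost, and_true,
      Nat.cast_ite, Nat.cast_one, CharP.cast_eq_zero, mul_ite, mul_zero, ite_mul, one_mul, zero_mul,
      Nat.add_eq_zero_iff, one_ne_zero, and_false, ↓reduceIte, add_tsub_cancel_right]
    rw [← univ_inter (B (s + 1) \ B s), ← sum_ite_mem]
    refine sum_congr rfl fun x _ => ?_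
    by_cases hx : x ∈ B (s + 1)
    · obtain ⟨a, ⟨haB, hax⟩, hu⟩ := hB.1 s (by omega) (part x)
      rw [Fintype.sum_eq_single a fun b hb => by
        simp only [ite_eq_left_iff]
        exact fun _ => if_neg fun h => hb (hu b ⟨h.2.1, h.1⟩)]
      by_cases hxs : x ∈ B s
      · obtain rfl := hu x ⟨hxs, rfl⟩
        simp [hxs]
      · simp [hx, hxs, haB, hax, show a ≠ x by rintro rfl; exact hxs haB]
    · simp [hx]

theorem IsFeasible.flowCost_flowOfSol {B : ℕ → Finset E} (hB : IsFeasible r T part B)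
    (w : E → ℝ) (c : ℕ → E → ℝ) :
    flowCost r T w c (flowOfSol r T part B) = solCost T w c B := by
  rw [flowCost, solCost, sum_mul_arcCost_eq_sum_in_elt,
    sum_comm (s := (univ : Finset E)) (t := (univ : Finset (Fin T))), ← sum_add_distrib,
    ← Fin.sum_univ_eq_sum_range]
  refine sum_congr rfl fun t _ => ?_
  rw [hB.sum_in_elt_arcCost_flowOfSol, add_comm]
  congr 1
  simp_rw [← Nat.cast_sum, hB.sum_out_elt_flowOfSol]
  simp

end Cost

theorem stmt_13_general [Fintype E] [DecidableEq E] (r T : ℕ) (hT : 0 < T)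
    (part : E → Fin r) (w : E → ℝ) (c : ℕ → E → ℝ) :
    ∃ Φ : {f : FNode E r T → FNode E r T → ℕ // IsFlow r T part f} ≃
        {B : ℕ → Finset E // IsFeasible r T part B},
      ∀ f, flowCost r T w c f.1 = solCost T w c (Φ f).1 := by
  refine ⟨{
    toFun := fun f => ⟨solOfFlow f.1, f.2.isFeasible_solOfFlow⟩
    invFun := fun B => ⟨flowOfSol r T part B.1, B.2.isFlow_flowOfSol hT⟩
    left_inv := fun f => Subtype.ext f.2.flowOfSol_solOfFlow
    right_inv := fun B => Subtype.ext B.2.solOfFlow_flowOfSol }, fun f => ?_⟩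
  conv_lhs => rw [← f.2.flowOfSol_solOfFlow]
  exact f.2.isFeasible_solOfFlow.flowCost_flowOfSol w c

/-- Integral flows of value `r` are in cost-preserving bijection with feasible
solutions of the multistage partition-matroid maintenance problem. -/
theorem stmt_13 [Fintype E] [DecidableEq E] (r T : ℕ) (hT : 0 < T)
    (part : E → Fin r) (w : E → ℝ) (hw : ∀ e, 0 ≤ w e) (c : ℕ → E → ℝ) :
    ∃ Φ : {f : FNode E r T → FNode E r T → ℕ // IsFlow r T part f} ≃
        {B : ℕ → Finset E // IsFeasible r T part B},
      ∀ f, flowCost r T w c f.1 = solCost T w c (Φ f).1 :=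
  stmt_13_general r T hT part w c
end

section
/- In the graph G on vertices {v₀, v₁, ..., v_n} (n even), suppose a spanning tree must be maintained at each of T = C(n, n/2) timesteps, where at timestep t the allowed edges among {v₁,...,v_n} are exactly those within U_t or within V_t for a balanced partition (U_t, V_t), plus all edges (v₀, v_i). If a set U_sol ⊆ {v₁,...,v_n} with |U_sol| ≤ n/2 indexes the star edges (v₀,v_i) ever acquired, then there exists a timestep t with U_sol ⊆ U_t, and at that timestep the acquired edges together with the allowed zero-cost edges do not connect v₀ to V_t. -/
/-!
Pick any balanced `U ⊇ Usol`. At that timestep the only edges leaving `U` are star edges,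
and those lead to `Usol ⊆ U`, so `{v₀} ∪ U` is closed under adjacency and `v₀` cannot reach
`Uᶜ`.
-/

/-- The graph available at the timestep corresponding to the balanced partition
`(U, Uᶜ)` of `{v₁,…,vₙ}`, where only the star edges indexed by `Usol` have been
acquired: edges within `U`, edges within `Uᶜ`, and the acquired star edges from
`v₀` (represented by `none`) to vertices of `Usol`. -/
def gapGraph (n : ℕ) (Usol U : Finset (Fin n)) : SimpleGraph (Option (Fin n)) :=
  SimpleGraph.fromRel (fun x y =>
    match x, y with
    | some a, some b => a ∈ U ↔ b ∈ U
    | none, some a => a ∈ Usol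
    | _, _ => False)

theorem SimpleGraph.Reachable.mem_of_forall_adj_mem {V : Type*} {G : SimpleGraph V} {S : Set V}
    (hS : ∀ ⦃x y⦄, G.Adj x y → x ∈ S → y ∈ S) {u v : V} (h : G.Reachable u v) (hu : u ∈ S) :
    v ∈ S := by
  by_contra hv
  obtain ⟨d, -, hd, hd'⟩ := h.some.exists_boundary_dart S hu hv
  exact hd' (hS d.adj hd)

section gapGraph

variable {n : ℕ} {Usol U : Finset (Fin n)}

theorem gapGraph_adj_mem_of_subset (hsub : Usol ⊆ U) {x y : Option (Fin n)}
    (hxy : (gapGraph n Usol U).Adj x y) (hx : ∀ a ∈ x, a ∈ U) : ∀ b ∈ y, b ∈ U := by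
  rintro b rfl
  rw [gapGraph, SimpleGraph.fromRel_adj] at hxy
  obtain ⟨-, hrel | hrel⟩ := hxy
  · cases x with
    | none => exact hsub hrel
    | some a => exact hrel.mp (hx a rfl)
  · cases x with
    | none => exact hrel.elim
    | some a => exact hrel.mpr (hx a rfl)

theorem not_reachable_gapGraph_of_subset (hsub : Usol ⊆ U) {v : Fin n} (hv : v ∉ U) :
    ¬ (gapGraph n Usol U).Reachable none (some v) := fun h =>
  -- `{x | ∀ a ∈ x, a ∈ U}` is `{v₀} ∪ U`
  hv (h.mem_of_forall_adj_mem (S := {x | ∀ a ∈ x, a ∈ U})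
    (fun _ _ hxy hx => gapGraph_adj_mem_of_subset hsub hxy hx) (by simp) v rfl)

end gapGraph

theorem stmt_14_general (n : ℕ)
    (Usol : Finset (Fin n)) (hcard : Usol.card ≤ n / 2) :
    ∃ U : Finset (Fin n), U.card = n / 2 ∧ Usol ⊆ U ∧
      ∀ v : Fin n, v ∉ U → ¬ (gapGraph n Usol U).Reachable none (some v) := by
  obtain ⟨U, hsub, hUcard⟩ := Finset.exists_superset_card_eq hcard
    (by simpa using Nat.div_le_self n 2)
  exact ⟨U, hUcard, hsub, fun _ => not_reachable_gapGraph_of_subset hsub⟩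

theorem stmt_14 (n : ℕ) (hn : Even n) (hpos : 0 < n)
    (Usol : Finset (Fin n)) (hcard : Usol.card ≤ n / 2) :
    ∃ U : Finset (Fin n), U.card = n / 2 ∧ Usol ⊆ U ∧
      ∀ v : Fin n, v ∉ U → ¬ (gapGraph n Usol U).Reachable none (some v) :=
  stmt_14_general n Usol hcard
end

section
/- Let M be a matroid on ground set E with rank function r, and suppose x, x' ∈ [0,1]^E with ‖x - x'‖₁ ≤ 1/4 and x in the spanning set polytope of M. Then the vector x̃'(e) := min(2·x'(e), 1) satisfies all constraints ∑_{e∈S} x̃'(e) ≥ r(E) - r(E\S) for S ⊆ E; i.e., x̃' lies in the spanning set polytope. -/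
namespace Finset

variable {α : Type*} {S : Finset α} {f : α → ℝ}

lemma int_le_sum_min_two_mul_one (h0 : ∀ e ∈ S, 0 ≤ f e) (h1 : ∀ e ∈ S, f e ≤ 1) {c : ℤ}
    (hc : (c : ℝ) - 1 / 2 < ∑ e ∈ S, f e) : (c : ℝ) ≤ ∑ e ∈ S, min (2 * f e) 1 := by
  classical
  set a := #(S.filter fun e => 1 ≤ 2 * f e)
  have ha : (a : ℝ) = ∑ e ∈ S, if 1 ≤ 2 * f e then (1 : ℝ) else 0 := by
    rw [sum_boole]
  have ha_le : (a : ℝ) ≤ ∑ e ∈ S, min (2 * f e) 1 := by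
    rw [ha]
    refine sum_le_sum fun e he => ?_
    split_ifs with h
    · exact le_min h le_rfl
    · exact le_min (by linarith [h0 e he]) zero_le_one
  have hsum_le : 2 * ∑ e ∈ S, f e ≤ ∑ e ∈ S, min (2 * f e) 1 + a := by
    rw [ha, mul_sum, ← sum_add_distrib]
    refine sum_le_sum fun e he => ?_
    split_ifs with h
    · linarith [min_eq_right h, h1 e he]
    · linarith [min_eq_left (le_of_not_ge h)]
  by_contra! hlt
  have ha_lt : (a : ℤ) < c := by exact_mod_cast ha_le.trans_lt hlt
  have ha_le' : (a : ℝ) ≤ c - 1 := by exact_mod_cast Int.le_sub_one_of_lt ha_lt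
  linarith

end Finset

theorem stmt_17_general {α : Type*} [Fintype α] (M : Matroid α)
    (x x' : α → ℝ) (hx' : ∀ e, 0 ≤ x' e ∧ x' e ≤ 1)
    (hclose : ∑ e, |x e - x' e| ≤ 1 / 4)
    (hxfeas : ∀ S : Finset α,
      (mrank M Set.univ : ℝ) - (mrank M (Set.univ \ ↑S) : ℝ) ≤ ∑ e ∈ S, x e) :
    ∀ S : Finset α,
      (mrank M Set.univ : ℝ) - (mrank M (Set.univ \ ↑S) : ℝ) ≤ ∑ e ∈ S, min (2 * x' e) 1 := by
  intro S
  have hshift : ∑ e ∈ S, x e ≤ ∑ e ∈ S, x' e + 1 / 4 :=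
    calc ∑ e ∈ S, x e ≤ ∑ e ∈ S, x' e + ∑ e ∈ S, |x e - x' e| := by
          rw [← Finset.sum_add_distrib]
          exact Finset.sum_le_sum fun e _ => by linarith [le_abs_self (x e - x' e)]
      _ ≤ ∑ e ∈ S, x' e + ∑ e, |x e - x' e| :=
          add_le_add_right (Finset.sum_le_univ_sum_of_nonneg fun e => abs_nonneg _) _
      _ ≤ ∑ e ∈ S, x' e + 1 / 4 := by linarith
  have hrank := Finset.int_le_sum_min_two_mul_one (S := S) (fun e _ => (hx' e).1)
    (fun e _ => (hx' e).2) (c := (mrank M Set.univ : ℤ) - mrank M (Set.univ \ ↑S))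
    (by push_cast; linarith [hxfeas S])
  exact_mod_cast hrank

theorem stmt_17 {α : Type*} [Fintype α] (M : Matroid α) (hE : M.E = Set.univ)
    (x x' : α → ℝ) (hx : ∀ e, 0 ≤ x e ∧ x e ≤ 1) (hx' : ∀ e, 0 ≤ x' e ∧ x' e ≤ 1)
    (hclose : ∑ e, |x e - x' e| ≤ 1 / 4)
    (hxfeas : ∀ S : Finset α,
      (mrank M Set.univ : ℝ) - (mrank M (Set.univ \ ↑S) : ℝ) ≤ ∑ e ∈ S, x e) :
    ∀ S : Finset α,
      (mrank M Set.univ : ℝ) - (mrank M (Set.univ \ ↑S) : ℝ) ≤ ∑ e ∈ S, min (2 * x' e) 1 :=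
  stmt_17_general M x x' hx' hclose hxfeas
end

section
/- Let M₁ and M₂ be matroids on the same ground set E. Define a ground set E' = E × E where element (e, e') has cost c₁(e) + c₂(e') + w(e) + w(e')·1[e ≠ e'], and lift M₁ to E' via the first coordinate and M₂ via the second coordinate (an element set X ⊆ E' is independent in the lifted M₁ iff its multiset of first coordinates, with no repeats, is independent in M₁, and similarly for M₂). Then minimum-cost solutions to the two-round multistage matroid maintenance problem (choose bases B₁ of M₁ and B₂ of M₂ minimizing c₁(B₁) + c₂(B₂) + w(B₁) + w(B₂ \ B₁)) correspond to minimum-cost common bases of the two lifted matroids, when a bijection pairing B₁ with B₂ is chosen to maximize overlap. -/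
/-!
A common base `X` of the two lifted matroids is exactly the graph of a bijection between a base
`B₁ = fst '' X` of `M₁` and a base `B₂ = snd '' X` of `M₂`, and its lifted cost is
`c₁(B₁) + c₂(B₂) + w(B₁)` plus `w` of the second coordinates of its off-diagonal pairs. These
second coordinates always cover `B₂ \ B₁`, so each common base costs at least the two-round cost of
its projections; conversely, a bijection `B₁ → B₂` fixing `B₁ ∩ B₂` and matching `B₁ \ B₂` with
`B₂ \ B₁` has off-diagonal second coordinates exactly `B₂ \ B₁`, so its graph attains the two-round
cost of `(B₁, B₂)`.
-/

open Set Function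

namespace Matroid

lemma comap_isBase_iff_of_surjective {α β : Type*} {M : Matroid β} {f : α → β}
    (hf : Surjective f) {B : Set α} :
    (M.comap f).IsBase B ↔ M.IsBase (f '' B) ∧ B.InjOn f := by
  rw [comap_isBase_iff, image_preimage_eq _ hf, isBasis_ground_iff, ← image_subset_iff]
  exact ⟨fun h => ⟨h.1, h.2.1⟩, fun h => ⟨h.1, h.2, h.1.subset_ground⟩⟩

end Matroid

namespace Set

variable {α β : Type*}

lemma injOn_snd_graphOn {f : α → β} {s : Set α} (hf : InjOn f s) :
    (s.graphOn f).InjOn Prod.snd := by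
  rintro _ ⟨a, ha, rfl⟩ _ ⟨b, hb, rfl⟩ hab
  rw [hf ha hb hab]

lemma graphOn_sdiff_diagonal {f : α → α} {s t : Set α} (hst : MapsTo f (s \ t) (t \ s))
    (hfix : EqOn f id (s ∩ t)) : s.graphOn f \ diagonal α = (s \ t).graphOn f := by
  ext ⟨a, b⟩
  simp only [mem_sdiff, mem_graphOn, mem_diagonal_iff]
  constructor
  · rintro ⟨⟨ha, rfl⟩, hne⟩
    exact ⟨⟨ha, fun hat => hne (hfix ⟨ha, hat⟩).symm⟩, rfl⟩
  · rintro ⟨hast, rfl⟩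
    exact ⟨⟨hast.1, rfl⟩, fun h => (hst hast).2 (h ▸ hast.1)⟩

lemma Finite.exists_bijOn_sdiff_eqOn_inter {s t : Set α} (hs : s.Finite) (ht : t.Finite)
    (hcard : s.ncard = t.ncard) :
    ∃ f : α → α, BijOn f s t ∧ BijOn f (s \ t) (t \ s) ∧ EqOn f id (s ∩ t) := by
  classical
  rcases isEmpty_or_nonempty α with _ | _
  · exact ⟨id, by simp [eq_empty_of_isEmpty]⟩
  have hencard : (s \ t).encard = (t \ s).encard := by
    rw [← (hs.sdiff).cast_ncard_eq, ← (ht.sdiff).cast_ncard_eq,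
      (ncard_eq_ncard_iff_ncard_sdiff_eq_ncard_sdiff hs ht).1 hcard]
  obtain ⟨g, hg⟩ := hs.sdiff.exists_bijOn_of_encard_eq hencard
  set f := (s \ t).piecewise g id
  have hsdiff : BijOn f (s \ t) (t \ s) := hg.congr (piecewise_eqOn _ _ _).symm
  have hinter : EqOn f id (s ∩ t) :=
    (piecewise_eqOn_compl _ _ _).mono fun _ he (hsd : _ ∈ s \ t) => hsd.2 he.2
  refine ⟨f, ?_, hsdiff, hinter⟩
  have hdisj : Disjoint (s \ t) (s ∩ t) := disjoint_sdiff_inter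
  have hunion := hsdiff.union ((bijOn_id _).congr hinter.symm) ((injOn_union hdisj).2
    ⟨hsdiff.injOn, (injOn_id _).congr hinter.symm,
      fun x hx y hy hxy => (hsdiff.mapsTo hx).2 (hxy ▸ hinter hy ▸ hy.1)⟩)
  rwa [sdiff_union_inter, inter_comm, sdiff_union_inter] at hunion

end Set

section TwoRoundMaintenance

variable {α : Type*} (c₁ c₂ w : α → ℝ)

noncomputable def twoRoundCost (B₁ B₂ : Set α) : ℝ :=
  (∑ᶠ e ∈ B₁, c₁ e) + (∑ᶠ e ∈ B₂, c₂ e) + (∑ᶠ e ∈ B₁, w e) + ∑ᶠ e ∈ B₂ \ B₁, w e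

def pairCost [DecidableEq α] (p : α × α) : ℝ :=
  c₁ p.1 + c₂ p.2 + w p.1 + if p.1 = p.2 then 0 else w p.2

variable [Finite α] [DecidableEq α] {c₁ c₂ w}

lemma sum_pairCost_eq {X : Set (α × α)} (h₁ : X.InjOn Prod.fst) (h₂ : X.InjOn Prod.snd) :
    ∑ᶠ p ∈ X, pairCost c₁ c₂ w p =
      (∑ᶠ e ∈ Prod.fst '' X, c₁ e) + (∑ᶠ e ∈ Prod.snd '' X, c₂ e) +
        (∑ᶠ e ∈ Prod.fst '' X, w e) + ∑ᶠ e ∈ Prod.snd '' (X \ diagonal α), w e := by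
  have hoff : ∑ᶠ p ∈ X, (if p.1 = p.2 then 0 else w p.2) = ∑ᶠ p ∈ X \ diagonal α, w p.2 := by
    rw [← finsum_mem_inter_add_sdiff (diagonal α) (toFinite X),
      finsum_mem_congr rfl fun p hp => if_pos hp.2, finsum_mem_zero, zero_add]
    exact finsum_mem_congr rfl fun p hp => if_neg hp.2
  simp only [pairCost]
  rw [finsum_mem_add_distrib (toFinite X), finsum_mem_add_distrib (toFinite X),
    finsum_mem_add_distrib (toFinite X), hoff, finsum_mem_image h₁, finsum_mem_image h₂,
    finsum_mem_image h₁, finsum_mem_image (h₂.mono sdiff_subset)]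

lemma twoRoundCost_image_le_sum_pairCost (hw : ∀ e, 0 ≤ w e) {X : Set (α × α)}
    (h₁ : X.InjOn Prod.fst) (h₂ : X.InjOn Prod.snd) :
    twoRoundCost c₁ c₂ w (Prod.fst '' X) (Prod.snd '' X) ≤ ∑ᶠ p ∈ X, pairCost c₁ c₂ w p := by
  have hsub : Prod.snd '' X \ Prod.fst '' X ⊆ Prod.snd '' (X \ diagonal α) := by
    rintro _ ⟨⟨p, hp, rfl⟩, hp₂⟩
    exact ⟨p, ⟨hp, fun hdiag => hp₂ ⟨p, hp, hdiag⟩⟩, rfl⟩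
  rw [sum_pairCost_eq h₁ h₂, twoRoundCost, ← finsum_mem_add_sdiff hsub (toFinite _)]
  gcongr
  exact le_add_of_nonneg_right (finsum_nonneg fun e => finsum_nonneg fun _ => hw e)

lemma sum_pairCost_graphOn {f : α → α} {s t : Set α} (hf : BijOn f s t)
    (hsdiff : BijOn f (s \ t) (t \ s)) (hfix : EqOn f id (s ∩ t)) :
    ∑ᶠ p ∈ s.graphOn f, pairCost c₁ c₂ w p = twoRoundCost c₁ c₂ w s t := by
  rw [sum_pairCost_eq fst_injOn_graph (injOn_snd_graphOn hf.injOn),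
    graphOn_sdiff_diagonal hsdiff.mapsTo hfix, image_fst_graphOn, image_snd_graphOn,
    image_snd_graphOn, hf.image_eq, hsdiff.image_eq, twoRoundCost]

end TwoRoundMaintenance

theorem stmt_18_general {α : Type*} [Fintype α] [DecidableEq α] (M₁ M₂ : Matroid α)
    -- both matroids have the same rank
    (hrk : ∀ B₁ B₂ : Set α, M₁.IsBase B₁ → M₂.IsBase B₂ → B₁.ncard = B₂.ncard)
    (c₁ c₂ w : α → ℝ) (hw : ∀ e, 0 ≤ w e) :
    sInf {v : ℝ | ∃ B₁ B₂ : Set α, M₁.IsBase B₁ ∧ M₂.IsBase B₂ ∧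
        v = (∑ᶠ e ∈ B₁, c₁ e) + (∑ᶠ e ∈ B₂, c₂ e) + (∑ᶠ e ∈ B₁, w e) +
          ∑ᶠ e ∈ B₂ \ B₁, w e} =
    sInf {v : ℝ | ∃ X : Set (α × α),
        (M₁.comap Prod.fst).IsBase X ∧ (M₂.comap Prod.snd).IsBase X ∧
        v = ∑ᶠ p ∈ X, (c₁ p.1 + c₂ p.2 + w p.1 + if p.1 = p.2 then 0 else w p.2)} := by
  have hfst : Surjective (Prod.fst : α × α → α) := fun a => ⟨(a, a), rfl⟩
  have hsnd : Surjective (Prod.snd : α × α → α) := fun a => ⟨(a, a), rfl⟩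
  simp only [Matroid.comap_isBase_iff_of_surjective hfst,
    Matroid.comap_isBase_iff_of_surjective hsnd]
  apply csInf_eq_csInf_of_forall_exists_le
  · rintro _ ⟨B₁, B₂, hB₁, hB₂, rfl⟩
    obtain ⟨f, hf, hsdiff, hfix⟩ :=
      (toFinite B₁).exists_bijOn_sdiff_eqOn_inter (toFinite B₂) (hrk B₁ B₂ hB₁ hB₂)
    refine ⟨_, ⟨B₁.graphOn f, ?_, ?_, rfl⟩, (sum_pairCost_graphOn hf hsdiff hfix).le⟩
    · exact ⟨(image_fst_graphOn f B₁).symm ▸ hB₁, fst_injOn_graph⟩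
    · exact ⟨(image_snd_graphOn f).symm ▸ hf.image_eq.symm ▸ hB₂, injOn_snd_graphOn hf.injOn⟩
  · rintro _ ⟨X, ⟨hX₁, hinj₁⟩, ⟨hX₂, hinj₂⟩, rfl⟩
    exact ⟨_, ⟨_, _, hX₁, hX₂, rfl⟩, twoRoundCost_image_le_sum_pairCost hw hinj₁ hinj₂⟩

theorem stmt_18 {α : Type*} [Fintype α] [DecidableEq α] (M₁ M₂ : Matroid α)
    (hE₁ : M₁.E = Set.univ) (hE₂ : M₂.E = Set.univ)
    -- both matroids have the same rank
    (hrk : ∀ B₁ B₂ : Set α, M₁.IsBase B₁ → M₂.IsBase B₂ → B₁.ncard = B₂.ncard)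
    (c₁ c₂ w : α → ℝ) (hw : ∀ e, 0 ≤ w e) :
    sInf {v : ℝ | ∃ B₁ B₂ : Set α, M₁.IsBase B₁ ∧ M₂.IsBase B₂ ∧
        v = (∑ᶠ e ∈ B₁, c₁ e) + (∑ᶠ e ∈ B₂, c₂ e) + (∑ᶠ e ∈ B₁, w e) +
          ∑ᶠ e ∈ B₂ \ B₁, w e} =
    sInf {v : ℝ | ∃ X : Set (α × α),
        (M₁.comap Prod.fst).IsBase X ∧ (M₂.comap Prod.snd).IsBase X ∧
        v = ∑ᶠ p ∈ X, (c₁ p.1 + c₂ p.2 + w p.1 + if p.1 = p.2 then 0 else w p.2)} :=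
  stmt_18_general M₁ M₂ hrk c₁ c₂ w hw
end
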